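/- arXiv:1003.1603 — 11 statements merged into one kernel-verified Lean document; each statement's English description precedes it below -/
import Mathlib

section
/- For every natural number n and real x > 0: Σ_{k=0}^{n} C(n,k)·(-1)^k/(x+k) = 1/(x·C(x+n, n)), where C(x+n,n) = ∏_{i=1}^{n}(x+i)/n! is the generalized binomial coefficient. -/
open Finset

lemma key_sum_alternating (n : ℕ) : ∀ x : ℝ, 0 < x →
    ∑ k ∈ Finset.range (n + 1), (n.choose k : ℝ) * (-1) ^ k / (x + k) =
      (n.factorial : ℝ) / ∏ i ∈ Finset.range (n + 1), (x + i) := by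
  induction n with
  | zero => intro x hx; simp
  | succ n ih =>
    intro x hx
    have hx1 : (0:ℝ) < x + 1 := by linarith
    have hP : (0:ℝ) < ∏ i ∈ Finset.range (n + 1), (x + i) := by
      apply Finset.prod_pos; intro i _; positivity
    have hQ : (0:ℝ) < ∏ i ∈ Finset.range (n + 1), (x + 1 + i) := by
      apply Finset.prod_pos; intro i _; positivity
    have hsplit : ∑ k ∈ Finset.range (n + 2), ((n+1).choose k : ℝ) * (-1) ^ k / (x + k)
        = (∑ k ∈ Finset.range (n + 1), (n.choose k : ℝ) * (-1) ^ k / (x + k))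
          - ∑ k ∈ Finset.range (n + 1), (n.choose k : ℝ) * (-1) ^ k / (x + 1 + k) := by
      rw [Finset.sum_range_succ' (fun k => ((n+1).choose k : ℝ) * (-1) ^ k / (x + k)) (n+1)]
      have : ∀ j ∈ Finset.range (n+1),
          ((n+1).choose (j+1) : ℝ) * (-1) ^ (j+1) / (x + ↑(j+1))
          = (n.choose (j+1) : ℝ) * (-1) ^ (j+1) / (x + ↑(j+1))
            - (n.choose j : ℝ) * (-1) ^ j / (x + 1 + j) := by
        intro j _
        rw [Nat.choose_succ_succ]
        push_cast
        ring
      rw [Finset.sum_congr rfl this, Finset.sum_sub_distrib]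
      have h2 : (∑ j ∈ Finset.range (n+1), (n.choose (j+1) : ℝ) * (-1) ^ (j+1) / (x + ↑(j+1)))
          + ((n+1).choose 0 : ℝ) * (-1)^0 / (x + (0:ℕ))
          = ∑ k ∈ Finset.range (n + 2), (n.choose k : ℝ) * (-1) ^ k / (x + k) := by
        rw [Finset.sum_range_succ' (fun k => (n.choose k : ℝ) * (-1) ^ k / (x + k)) (n+1)]
        simp
      have h3 : ∑ k ∈ Finset.range (n + 2), (n.choose k : ℝ) * (-1) ^ k / (x + k)
          = ∑ k ∈ Finset.range (n + 1), (n.choose k : ℝ) * (-1) ^ k / (x + k) := by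
        rw [Finset.sum_range_succ]
        simp [Nat.choose_succ_self]
      push_cast at h2 ⊢
      linarith [h2, h3]
    rw [hsplit, ih x hx, ih (x+1) hx1]
    have hprod1 : ∏ i ∈ Finset.range (n + 2), (x + i)
        = (∏ i ∈ Finset.range (n + 1), (x + i)) * (x + (n+1)) := by
      rw [Finset.prod_range_succ]; push_cast; ring_nf
    have hprod2 : ∏ i ∈ Finset.range (n + 2), (x + i)
        = (∏ i ∈ Finset.range (n + 1), (x + 1 + i)) * x := by
      rw [Finset.prod_range_succ' (fun i => (x + i)) (n+1)]
      push_cast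
      rw [add_zero]
      congr 1
      exact Finset.prod_congr rfl (fun j _ => by ring)
    rw [hprod1]
    have hfac : ((n+1).factorial : ℝ) = (n+1) * n.factorial := by
      push_cast [Nat.factorial_succ]; ring
    rw [hfac]
    have hQeq : ∏ i ∈ Finset.range (n + 1), (x + 1 + i)
        = (∏ i ∈ Finset.range (n + 1), (x + i)) * (x + (n+1)) / x := by
      rw [eq_div_iff hx.ne', ← hprod2, hprod1]
    rw [hQeq]
    have hxn : (0:ℝ) < x + (n+1) := by positivity
    field_simp
    ring

/-- Generalized binomial coefficient `C(x+n, n) = ∏_{i=1}^{n} (x+i) / n!`. -/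
noncomputable def genBinom (x : ℝ) (n : ℕ) : ℝ :=
  (∏ i ∈ Finset.Icc 1 n, (x + i)) / (Nat.factorial n)

theorem sum_alternating_inv (n : ℕ) (x : ℝ) (hx : 0 < x) :
    ∑ k ∈ Finset.range (n + 1), (n.choose k : ℝ) * (-1) ^ k / (x + k) =
      1 / (x * genBinom x n) := by
  rw [key_sum_alternating n x hx, genBinom]
  have h : ∏ i ∈ Finset.range (n + 1), (x + i) = x * ∏ i ∈ Finset.Icc 1 n, (x + i) := by
    rw [Finset.prod_range_succ' (fun i => (x + i)) n, ← Finset.Ico_add_one_right_eq_Icc,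
      Finset.prod_Ico_eq_prod_range]
    simp only [Nat.add_sub_cancel, Nat.cast_zero, add_zero]
    rw [mul_comm]
    congr 1
    exact Finset.prod_congr rfl (fun j _ => by push_cast; ring)
  rw [h]
  have hI : (0:ℝ) < ∏ i ∈ Finset.Icc 1 n, (x + i) := by
    apply Finset.prod_pos; intro i hi
    have : (0:ℝ) ≤ i := Nat.cast_nonneg i
    linarith
  have hf : (0:ℝ) < (n.factorial : ℝ) := by positivity
  field_simp
end

section
/- Define f_{n,m,k}(t) = (∏_{j=1}^{k-1}(1 - t/α_j)) / ((∏_{j=1}^{n}(1 - t/α_j))·(∏_{ℓ=1}^{m}(1 + t/β_ℓ))) for positive reals α_j, β_ℓ. Then for all n, m, k ≥ 1 with t avoiding all poles: (α_n/(α_n+β_m))·f_{n-1,m,k}(t) + (β_m/(α_n+β_m))·f_{n,m-1,k}(t) = f_{n,m,k}(t). -/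
open Finset

/-- The function `f_{n,m,k}(t)` of urn model I with weight sequences `α`, `β`. -/
noncomputable def urnF (α β : ℕ → ℝ) (k : ℕ) (t : ℂ) (n m : ℕ) : ℂ :=
  (∏ j ∈ Finset.Icc 1 (k - 1), (1 - t / (α j : ℂ))) /
    ((∏ j ∈ Finset.Icc 1 n, (1 - t / (α j : ℂ))) *
      (∏ l ∈ Finset.Icc 1 m, (1 + t / (β l : ℂ))))

lemma aux_alpha_ne (a : ℝ) (ha : 0 < a) (t : ℂ) (ht : t ≠ (a : ℂ)) :
    (1 : ℂ) - t / (a : ℂ) ≠ 0 := by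
  have ha' : (a : ℂ) ≠ 0 := by exact_mod_cast ha.ne'
  intro h
  apply ht
  have h2 : t / (a : ℂ) = 1 := by linear_combination -h
  rw [div_eq_iff ha'] at h2
  simpa using h2

lemma aux_beta_ne (b : ℝ) (hb : 0 < b) (t : ℂ) (ht : t ≠ -(b : ℂ)) :
    (1 : ℂ) + t / (b : ℂ) ≠ 0 := by
  have hb' : (b : ℂ) ≠ 0 := by exact_mod_cast hb.ne'
  intro h
  apply ht
  have h2 : t / (b : ℂ) = -1 := by linear_combination h
  rw [div_eq_iff hb'] at h2
  simpa using h2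

theorem urnF_recurrence (α β : ℕ → ℝ)
    (hα : ∀ i, 1 ≤ i → 0 < α i) (hβ : ∀ i, 1 ≤ i → 0 < β i)
    (k n m : ℕ) (hk : 1 ≤ k) (hn : 1 ≤ n) (hm : 1 ≤ m)
    (t : ℂ) (ht1 : ∀ j ∈ Finset.Icc k n, t ≠ (α j : ℂ))
    (ht2 : ∀ l ∈ Finset.Icc 1 m, t ≠ -(β l : ℂ)) :
    ((α n : ℂ) / ((α n : ℂ) + (β m : ℂ))) * urnF α β k t (n - 1) m +
      ((β m : ℂ) / ((α n : ℂ) + (β m : ℂ))) * urnF α β k t n (m - 1) =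
      urnF α β k t n m := by
  by_cases h0 : ∃ j ∈ Finset.Icc 1 (k - 1), (1 : ℂ) - t / (α j : ℂ) = 0
  · obtain ⟨j, hj, hz⟩ := h0
    have hnum : (∏ j ∈ Finset.Icc 1 (k - 1), (1 - t / (α j : ℂ))) = 0 :=
      Finset.prod_eq_zero hj hz
    simp [urnF, hnum]
  · push_neg at h0
    -- all relevant factors are nonzero
    have hAfac : ∀ j ∈ Finset.Icc 1 n, (1 : ℂ) - t / (α j : ℂ) ≠ 0 := by
      intro j hj
      simp only [Finset.mem_Icc] at hj
      by_cases hjk : j ≤ k - 1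
      · exact h0 j (Finset.mem_Icc.mpr ⟨hj.1, hjk⟩)
      · have hkj : k ≤ j := by omega
        exact aux_alpha_ne _ (hα j hj.1) t (ht1 j (Finset.mem_Icc.mpr ⟨hkj, hj.2⟩))
    have hBfac : ∀ l ∈ Finset.Icc 1 m, (1 : ℂ) + t / (β l : ℂ) ≠ 0 := by
      intro l hl
      simp only [Finset.mem_Icc] at hl
      exact aux_beta_ne _ (hβ l hl.1) t (ht2 l (Finset.mem_Icc.mpr hl))
    set A := ∏ j ∈ Finset.Icc 1 (n - 1), (1 - t / (α j : ℂ)) with hA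
    set B := ∏ l ∈ Finset.Icc 1 (m - 1), (1 + t / (β l : ℂ)) with hB
    set N := ∏ j ∈ Finset.Icc 1 (k - 1), (1 - t / (α j : ℂ)) with hN
    have hnsplit : (∏ j ∈ Finset.Icc 1 n, (1 - t / (α j : ℂ)))
        = A * (1 - t / (α n : ℂ)) := by
      have h := Finset.prod_Icc_succ_top (by omega : 1 ≤ n - 1 + 1)
        (fun j => (1 : ℂ) - t / (α j : ℂ))
      rw [show n - 1 + 1 = n from by omega] at h
      simpa using h
    have hmsplit : (∏ l ∈ Finset.Icc 1 m, (1 + t / (β l : ℂ)))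
        = B * (1 + t / (β m : ℂ)) := by
      have h := Finset.prod_Icc_succ_top (by omega : 1 ≤ m - 1 + 1)
        (fun l => (1 : ℂ) + t / (β l : ℂ))
      rw [show m - 1 + 1 = m from by omega] at h
      simpa using h
    have hAne : A ≠ 0 := by
      rw [hA]
      exact Finset.prod_ne_zero_iff.mpr fun j hj => hAfac j
        (Finset.mem_Icc.mpr ⟨(Finset.mem_Icc.mp hj).1, by
          have := (Finset.mem_Icc.mp hj).2; omega⟩)
    have hBne : B ≠ 0 := by
      rw [hB]
      exact Finset.prod_ne_zero_iff.mpr fun l hl => hBfac l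
        (Finset.mem_Icc.mpr ⟨(Finset.mem_Icc.mp hl).1, by
          have := (Finset.mem_Icc.mp hl).2; omega⟩)
    have han : (1 : ℂ) - t / (α n : ℂ) ≠ 0 :=
      hAfac n (Finset.mem_Icc.mpr ⟨hn, le_refl n⟩)
    have hbm : (1 : ℂ) + t / (β m : ℂ) ≠ 0 :=
      hBfac m (Finset.mem_Icc.mpr ⟨hm, le_refl m⟩)
    have hane : (α n : ℂ) ≠ 0 := by exact_mod_cast (hα n hn).ne'
    have hbne : (β m : ℂ) ≠ 0 := by exact_mod_cast (hβ m hm).ne'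
    have habne : (α n : ℂ) + (β m : ℂ) ≠ 0 := by
      have : (0 : ℝ) < α n + β m := add_pos (hα n hn) (hβ m hm)
      exact_mod_cast this.ne'
    unfold urnF
    rw [hmsplit, hnsplit, ← hA, ← hB, ← hN]
    have hD1 : A * (B * (1 + t / (β m : ℂ))) ≠ 0 :=
      mul_ne_zero hAne (mul_ne_zero hBne hbm)
    have hD2 : A * (1 - t / (α n : ℂ)) * B ≠ 0 :=
      mul_ne_zero (mul_ne_zero hAne han) hBne
    have hD : A * (1 - t / (α n : ℂ)) * (B * (1 + t / (β m : ℂ))) ≠ 0 :=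
      mul_ne_zero (mul_ne_zero hAne han) (mul_ne_zero hBne hbm)
    have e1 : N / (A * (B * (1 + t / (β m : ℂ))))
        = (1 - t / (α n : ℂ)) * (N / (A * (1 - t / (α n : ℂ)) * (B * (1 + t / (β m : ℂ))))) := by
      rw [← mul_div_assoc, div_eq_div_iff hD1 hD]
      ring
    have e2 : N / (A * (1 - t / (α n : ℂ)) * B)
        = (1 + t / (β m : ℂ)) * (N / (A * (1 - t / (α n : ℂ)) * (B * (1 + t / (β m : ℂ))))) := by
      rw [← mul_div_assoc, div_eq_div_iff hD2 hD]
      ring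
    rw [e1, e2]
    have key : ((α n : ℂ) / ((α n : ℂ) + (β m : ℂ))) * (1 - t / (α n : ℂ))
        + ((β m : ℂ) / ((α n : ℂ) + (β m : ℂ))) * (1 + t / (β m : ℂ)) = 1 := by
      field_simp
      ring
    calc ((α n : ℂ) / ((α n : ℂ) + (β m : ℂ))) * ((1 - t / (α n : ℂ)) *
            (N / (A * (1 - t / (α n : ℂ)) * (B * (1 + t / (β m : ℂ)))))) +
          ((β m : ℂ) / ((α n : ℂ) + (β m : ℂ))) * ((1 + t / (β m : ℂ)) *
            (N / (A * (1 - t / (α n : ℂ)) * (B * (1 + t / (β m : ℂ))))))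
        = (((α n : ℂ) / ((α n : ℂ) + (β m : ℂ))) * (1 - t / (α n : ℂ))
            + ((β m : ℂ) / ((α n : ℂ) + (β m : ℂ))) * (1 + t / (β m : ℂ))) *
            (N / (A * (1 - t / (α n : ℂ)) * (B * (1 + t / (β m : ℂ))))) := by ring
      _ = N / (A * (1 - t / (α n : ℂ)) * (B * (1 + t / (β m : ℂ)))) := by rw [key, one_mul]
end

section
/- Let P : ℕ × ℕ → (ℕ → ℝ) satisfy the urn model I recurrence with positive weight sequences (α_n), (β_m): P(n,m)(k) = (α_n/(α_n+β_m))·P(n-1,m)(k) + (β_m/(α_n+β_m))·P(n,m-1)(k) for n,m ≥ 1, with P(n,0)(k) = δ_{k,n} and P(0,m)(k) = δ_{k,0}. Let Q satisfy the urn model II recurrence with weight sequences α̃_n = 1/α_n, β̃_m = 1/β_m: Q(n,m)(k) = (β̃_m/(α̃_n+β̃_m))·Q(n-1,m)(k) + (α̃_n/(α̃_n+β̃_m))·Q(n,m-1)(k) with the same boundary conditions. Then P(n,m)(k) = Q(n,m)(k) for all n, m, k. -/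
/-!
Both families are determined by their values on the two axes and by a recurrence of the same
shape, so it suffices that the coefficients agree: reciprocal weights swap the roles of the two
colours, since `(1/β)/(1/α + 1/β) = α/(α + β)`.
-/

theorem one_div_div_one_div_add_one_div {K : Type*} [Field K] {a b : K} (ha : a ≠ 0)
    (hb : b ≠ 0) : 1 / b / (1 / a + 1 / b) = a / (a + b) := by
  rw [one_div_add_one_div ha hb, div_div_eq_mul_div, one_div_mul_eq_div, mul_div_cancel_right₀ a hb]

theorem funext₂_of_boundary_of_recurrence {α : Type*} {F G : ℕ → ℕ → α}
    (step : ℕ → ℕ → α → α → α) (hcol : ∀ n, F n 0 = G n 0) (hrow : ∀ m, F 0 m = G 0 m)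
    (hF : ∀ n m, F (n + 1) (m + 1) = step n m (F n (m + 1)) (F (n + 1) m))
    (hG : ∀ n m, G (n + 1) (m + 1) = step n m (G n (m + 1)) (G (n + 1) m)) :
    F = G := by
  funext n m
  induction n generalizing m with
  | zero => exact hrow m
  | succ n ih =>
    induction m with
    | zero => exact hcol (n + 1)
    | succ m ihm => rw [hF, hG, ih, ihm]

/-- Duality between urn model I with weights `(α, β)` and urn model II with the
reciprocal weights `(1/α, 1/β)`. -/
theorem urn_duality (α β : ℕ → ℝ)
    (hα : ∀ i, 1 ≤ i → 0 < α i) (hβ : ∀ i, 1 ≤ i → 0 < β i)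
    (P Q : ℕ → ℕ → ℕ → ℝ)
    (hPrec : ∀ n m k, 1 ≤ n → 1 ≤ m →
      P n m k = (α n / (α n + β m)) * P (n - 1) m k +
        (β m / (α n + β m)) * P n (m - 1) k)
    (hP0 : ∀ n k, P n 0 k = if k = n then 1 else 0)
    (hP0' : ∀ m k, 1 ≤ m → P 0 m k = if k = 0 then 1 else 0)
    (hQrec : ∀ n m k, 1 ≤ n → 1 ≤ m →
      Q n m k = ((1 / β m) / (1 / α n + 1 / β m)) * Q (n - 1) m k +
        ((1 / α n) / (1 / α n + 1 / β m)) * Q n (m - 1) k)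
    (hQ0 : ∀ n k, Q n 0 k = if k = n then 1 else 0)
    (hQ0' : ∀ m k, 1 ≤ m → Q 0 m k = if k = 0 then 1 else 0) :
    ∀ n m k, P n m k = Q n m k := by
  intro n m k
  have hQrec' : ∀ n m, Q (n + 1) (m + 1) k =
      α (n + 1) / (α (n + 1) + β (m + 1)) * Q n (m + 1) k +
        β (m + 1) / (α (n + 1) + β (m + 1)) * Q (n + 1) m k := by
    intro n m
    have ha := (hα (n + 1) (by omega)).ne'
    have hb := (hβ (m + 1) (by omega)).ne'
    rw [hQrec _ _ k (by omega) (by omega), one_div_div_one_div_add_one_div ha hb,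
      add_comm (1 / α _), one_div_div_one_div_add_one_div hb ha, add_comm (β _),
      Nat.add_sub_cancel, Nat.add_sub_cancel]
  refine congrFun (congrFun (funext₂_of_boundary_of_recurrence (F := fun n m => P n m k)
    (G := fun n m => Q n m k)
    (fun n m u v => α (n + 1) / (α (n + 1) + β (m + 1)) * u +
      β (m + 1) / (α (n + 1) + β (m + 1)) * v)
    (fun n => (hP0 n k).trans (hQ0 n k).symm) ?_
    (fun n m => hPrec _ _ k (by omega) (by omega)) hQrec') n) m
  rintro (_ | m)
  · exact (hP0 0 k).trans (hQ0 0 k).symm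
  · exact (hP0' _ k (by omega)).trans (hQ0' _ k (by omega)).symm
end

section
/- For the sampling without replacement urn with n white and m black balls (at each step a white ball is removed with probability (number white)/(number white + number black), else a black ball is removed, until one color is exhausted), the probability that exactly k white balls remain when all black balls have been removed equals C(n+m-1-k, m-1)/C(n+m, n), for 0 ≤ k ≤ n. -/
/-!
Multiplying by `C(n+m, n)` turns the transition weights `n/(n+m)` and `m/(n+m)` into
`C(n+m-1, n-1)` and `C(n+m-1, n)`, so `Q(n,m,k) = C(n+m, n) P(n,m,k)` satisfies Pascal's
recurrence `Q(n,m,k) = Q(n-1,m,k) + Q(n,m-1,k)`: it counts the orderings of the balls in which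
exactly `k` white balls follow the last black one. Since `Q(n,m,k) = 0` for `n < k` and
`Q(k,m,k) = 1`, induction gives `Q(k+j, b+1, k) = C(j+b, b)`.
-/

structure SamplingRecurrence (P : ℕ → ℕ → ℕ → ℝ) : Prop where
  step : ∀ n m k, 1 ≤ n → 1 ≤ m →
    P n m k = ((n : ℝ) / (n + m)) * P (n - 1) m k + ((m : ℝ) / (n + m)) * P n (m - 1) k
  no_black : ∀ n k, P n 0 k = if k = n then 1 else 0
  no_white : ∀ m k, 1 ≤ m → P 0 m k = if k = 0 then 1 else 0

def scaledByChoose (P : ℕ → ℕ → ℕ → ℝ) (n m k : ℕ) : ℝ :=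
  (n + m).choose n * P n m k

namespace SamplingRecurrence

variable {P : ℕ → ℕ → ℕ → ℝ}

theorem succ_succ (h : SamplingRecurrence P) (n m k : ℕ) :
    P (n + 1) (m + 1) k = ((n + 1 : ℝ) / (n + m + 2)) * P n (m + 1) k +
      ((m + 1 : ℝ) / (n + m + 2)) * P (n + 1) m k := by
  rw [h.step (n + 1) (m + 1) k (by omega) (by omega), Nat.add_sub_cancel, Nat.add_sub_cancel]
  push_cast
  ring

theorem eq_zero_of_lt (h : SamplingRecurrence P) {n k : ℕ} (hnk : n < k) (m : ℕ) :
    P n m k = 0 := by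
  induction n generalizing m with
  | zero =>
    cases m with
    | zero => simp [h.no_black, hnk.ne']
    | succ m => simp [h.no_white _ _ (Nat.succ_pos m), hnk.ne']
  | succ n ihn =>
    induction m with
    | zero => simp [h.no_black, hnk.ne']
    | succ m ihm => simp [h.succ_succ, ihn (by omega), ihm]

theorem scaledByChoose_succ_succ (h : SamplingRecurrence P) (n m k : ℕ) :
    scaledByChoose P (n + 1) (m + 1) k =
      scaledByChoose P n (m + 1) k + scaledByChoose P (n + 1) m k := by
  have white :
      ((n + m + 2).choose (n + 1) : ℝ) * (n + 1) = (n + m + 2) * (n + m + 1).choose n := by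
    exact_mod_cast (Nat.add_one_mul_choose_eq (n + m + 1) n).symm
  have black : ((n + m + 2).choose (n + 1) : ℝ) * (m + 1) =
      (n + m + 2) * (n + m + 1).choose (n + 1) := by
    have hc := Nat.choose_mul_succ_eq (n + m + 1) (n + 1)
    rw [show n + m + 1 + 1 - (n + 1) = m + 1 by omega] at hc
    rw [mul_comm (n + m + 2 : ℝ)]
    exact_mod_cast hc.symm
  simp only [scaledByChoose, h.succ_succ]
  rw [show n + 1 + (m + 1) = n + m + 2 by ring, show n + (m + 1) = n + m + 1 by ring,
    show n + 1 + m = n + m + 1 by ring]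
  field_simp
  linear_combination P n (m + 1) k * white + P (n + 1) m k * black

theorem scaledByChoose_self (h : SamplingRecurrence P) (n m : ℕ) :
    scaledByChoose P n m n = 1 := by
  cases n with
  | zero =>
    cases m with
    | zero => simp [scaledByChoose, h.no_black]
    | succ m => simp [scaledByChoose, h.no_white]
  | succ n =>
    induction m with
    | zero => simp [scaledByChoose, h.no_black]
    | succ m ih =>
      rw [h.scaledByChoose_succ_succ, ih, scaledByChoose, h.eq_zero_of_lt (Nat.lt_succ_self n)]
      simp

theorem scaledByChoose_add (h : SamplingRecurrence P) (k j b : ℕ) :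
    scaledByChoose P (k + j) (b + 1) k = (j + b).choose b := by
  induction j generalizing b with
  | zero => simp [h.scaledByChoose_self]
  | succ j ihj =>
    induction b with
    | zero =>
      rw [← add_assoc, h.scaledByChoose_succ_succ, ihj, scaledByChoose, h.no_black,
        if_neg (by omega)]
      simp
    | succ b ihb =>
      rw [← add_assoc, h.scaledByChoose_succ_succ, ihj, add_assoc, ihb,
        show j + 1 + (b + 1) = j + (b + 1) + 1 by ring, show j + 1 + b = j + (b + 1) by ring,
        Nat.choose_succ_succ' (j + (b + 1)), Nat.cast_add, add_comm]

end SamplingRecurrence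

/-- Sampling without replacement: probability that `k` white balls remain
when all black balls have been drawn. -/
theorem sampling_without_replacement (P : ℕ → ℕ → ℕ → ℝ)
    (hPrec : ∀ n m k, 1 ≤ n → 1 ≤ m →
      P n m k = ((n : ℝ) / (n + m)) * P (n - 1) m k +
        ((m : ℝ) / (n + m)) * P n (m - 1) k)
    (hP0 : ∀ n k, P n 0 k = if k = n then 1 else 0)
    (hP0' : ∀ m k, 1 ≤ m → P 0 m k = if k = 0 then 1 else 0) :
    ∀ n m k, 1 ≤ n → 1 ≤ m → k ≤ n →
      P n m k = ((n + m - 1 - k).choose (m - 1) : ℝ) / ((n + m).choose n) := by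
  intro n m k _ hm hk
  obtain ⟨j, rfl⟩ := Nat.exists_eq_add_of_le hk
  obtain ⟨b, rfl⟩ := Nat.exists_eq_add_of_le' hm
  have hQ := SamplingRecurrence.scaledByChoose_add ⟨hPrec, hP0, hP0'⟩ k j b
  have hpos : (0 : ℝ) < (k + j + (b + 1)).choose (k + j) := by
    exact_mod_cast Nat.choose_pos (by omega)
  rw [show k + j + (b + 1) - 1 - k = j + b by omega, Nat.add_sub_cancel, eq_div_iff hpos.ne',
    mul_comm, ← hQ, scaledByChoose]
end

section
/- Let P(n,m)(k) be defined by the recurrence P(n,m)(k) = (α_n/(α_n+β_m))·P(n-1,m)(k) + (β_m/(α_n+β_m))·P(n,m-1)(k) for n,m ≥ 1, with P(n,0)(k) = δ_{k,n} and P(0,m)(k) = δ_{k,0}, where (α_n) and (β_m) are sequences of positive reals with pairwise distinct terms (α_0 = 0). Then for n,m ≥ 1 and 0 ≤ k ≤ n: P(n,m)(k) = (∏_{h=1}^{m} β_h)·(∏_{h=k+1}^{n} α_h)·Σ_{ℓ=1}^{m} 1/((∏_{j=k}^{n}(α_j+β_ℓ))·(∏_{i=1, i≠ℓ}^{m}(β_i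 - β_ℓ))). -/
open Finset

/-!
Both `P` and the explicit formula satisfy the recurrence, so they agree by induction once the
boundary values match. On the diagonal the recurrence gives `P k m k = ∏ β i / (α k + β i)`
(the case `k = 0` being `P 0 m 0 = 1`, thanks to `α 0 = 0`), which is the partial fraction
expansion of the formula at `n = k`. Off the diagonal, the formula satisfies the recurrence
because of the divided-difference identity
`∑ₗ (β (m+1) - β l) g l / ∏_{i ≤ m+1, i ≠ l} (β i - β l) = ∑_{l ≤ m} g l / ∏_{i ≤ m, i ≠ l} (β i - β l)`.
-/

section PartialFractions

variable {ι K : Type*} [DecidableEq ι] [Field K]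

/-- Lagrange interpolation of the constant `1` at the nodes `-v i`, evaluated at `x`. -/
theorem inv_prod_add_eq_sum_div {s : Finset ι} (hs : s.Nonempty) {v : ι → K}
    (hv : Set.InjOn v s) {x : K} (hx : ∀ i ∈ s, x + v i ≠ 0) :
    (∏ i ∈ s, (x + v i))⁻¹ =
      ∑ l ∈ s, 1 / ((x + v l) * ∏ i ∈ s.erase l, (v i - v l)) := by
  have hneg : Set.InjOn (fun i => -v i) s := fun i hi j hj h => hv hi hj (neg_inj.mp h)
  have key := Lagrange.eval_interpolate_not_at_node (s := s) (v := fun i => -v i) (x := x) 1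
    (fun i hi h => hx i hi (by rw [h, neg_add_cancel]))
  simp only [Lagrange.interpolate_one hneg hs, Polynomial.eval_one, Lagrange.eval_nodal,
    Lagrange.nodalWeight, sub_neg_eq_add, neg_add_eq_sub, Pi.one_apply, mul_one] at key
  rw [inv_eq_of_mul_eq_one_right key.symm]
  refine sum_congr rfl fun l _ => ?_
  rw [one_div, mul_inv, prod_inv_distrib, mul_comm]

theorem sum_insert_sub_div_mul_prod_erase_sub {s : Finset ι} {a : ι} (ha : a ∉ s) {v : ι → K}
    (hv : ∀ l ∈ s, v l ≠ v a) (g : ι → K) :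
    ∑ l ∈ insert a s, (v a - v l) / (g l * ∏ i ∈ (insert a s).erase l, (v i - v l)) =
      ∑ l ∈ s, 1 / (g l * ∏ i ∈ s.erase l, (v i - v l)) := by
  rw [sum_insert ha, sub_self, zero_div, zero_add]
  refine sum_congr rfl fun l hl => ?_
  have hla : l ≠ a := ne_of_mem_of_not_mem hl ha
  rw [erase_insert_of_ne hla.symm, prod_insert fun h => ha (mem_of_mem_erase h), mul_left_comm,
    div_mul_cancel_left₀ (sub_ne_zero.mpr (hv l hl).symm), one_div]

end PartialFractions

section UrnModel

variable {K : Type*} [Field K] (α β : ℕ → K)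

def urnSum (k n m : ℕ) : K :=
  ∑ l ∈ Icc 1 m, 1 / ((∏ j ∈ Icc k n, (α j + β l)) * ∏ i ∈ (Icc 1 m).erase l, (β i - β l))

def urnFormula (n m k : ℕ) : K :=
  (∏ h ∈ Icc 1 m, β h) * (∏ h ∈ Icc (k + 1) n, α h) * urnSum α β k n m

variable {α β}

theorem urnSum_succ_succ {k n m : ℕ} (hk : k ≤ n + 1) (hαβ : ∀ j l, 1 ≤ l → α j + β l ≠ 0)
    (hβ : ∀ l ∈ Icc 1 m, β l ≠ β (m + 1)) :
    (α (n + 1) + β (m + 1)) * urnSum α β k (n + 1) (m + 1) =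
      urnSum α β k n (m + 1) + urnSum α β k (n + 1) m := by
  unfold urnSum
  rw [← sum_insert_sub_div_mul_prod_erase_sub (by simp) hβ,
    insert_Icc_right_eq_Icc_add_one (by omega), mul_sum, ← sum_add_distrib]
  refine sum_congr rfl fun l hl => ?_
  have hl : α (n + 1) + β l ≠ 0 := hαβ _ _ (mem_Icc.mp hl).1
  rw [prod_Icc_succ_top hk]
  field_simp
  ring

theorem urnFormula_succ_succ {n m k : ℕ} (hk : k ≤ n) (hαβ : ∀ j l, 1 ≤ l → α j + β l ≠ 0)
    (hβ : ∀ l ∈ Icc 1 m, β l ≠ β (m + 1)) :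
    urnFormula α β (n + 1) (m + 1) k =
      α (n + 1) / (α (n + 1) + β (m + 1)) * urnFormula α β n (m + 1) k +
        β (m + 1) / (α (n + 1) + β (m + 1)) * urnFormula α β (n + 1) m k := by
  have hab := hαβ (n + 1) (m + 1) (by omega)
  have hS := urnSum_succ_succ (by omega) hαβ hβ (n := n) (k := k)
  unfold urnFormula
  rw [prod_Icc_succ_top (by omega : 1 ≤ m + 1), prod_Icc_succ_top (by omega : k + 1 ≤ n + 1)]
  field_simp
  linear_combination (∏ h ∈ Icc 1 m, β h) * (∏ h ∈ Icc (k + 1) n, α h) * α (n + 1) *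
    β (m + 1) * hS

theorem urnFormula_self {m : ℕ} (hm : 1 ≤ m) (k : ℕ) (hαβ : ∀ l ∈ Icc 1 m, α k + β l ≠ 0)
    (hβ : Set.InjOn β (Icc 1 m)) :
    urnFormula α β k m k = ∏ i ∈ Icc 1 m, β i / (α k + β i) := by
  unfold urnFormula urnSum
  simp only [Icc_self, prod_singleton, Icc_eq_empty_of_lt (Nat.lt_succ_self k), prod_empty,
    mul_one]
  rw [← inv_prod_add_eq_sum_div (nonempty_Icc.mpr hm) hβ hαβ, prod_div_distrib, div_eq_mul_inv]

end UrnModel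

structure UrnRecurrence {K : Type*} [Field K] (α β : ℕ → K) (P : ℕ → ℕ → ℕ → K) : Prop where
  step : ∀ n m k, P (n + 1) (m + 1) k =
    α (n + 1) / (α (n + 1) + β (m + 1)) * P n (m + 1) k +
      β (m + 1) / (α (n + 1) + β (m + 1)) * P (n + 1) m k
  zero_right : ∀ n k, P n 0 k = if k = n then 1 else 0
  zero_left : ∀ m k, 1 ≤ m → P 0 m k = if k = 0 then 1 else 0

namespace UrnRecurrence

variable {K : Type*} [Field K] {α β : ℕ → K} {P : ℕ → ℕ → ℕ → K}

theorem eq_zero_of_lt (hP : UrnRecurrence α β P) {n k : ℕ} (m : ℕ) (hnk : n < k) :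
    P n m k = 0 := by
  induction m generalizing n with
  | zero => rw [hP.zero_right, if_neg hnk.ne']
  | succ m ihm =>
    induction n with
    | zero => rw [hP.zero_left _ _ m.succ_pos, if_neg hnk.ne']
    | succ n ihn => rw [hP.step, ihn (by omega), ihm hnk, mul_zero, mul_zero, add_zero]

theorem apply_self (hP : UrnRecurrence α β P) (hα0 : α 0 = 0) (hβ : ∀ i, 1 ≤ i → β i ≠ 0)
    (k m : ℕ) : P k m k = ∏ i ∈ Icc 1 m, β i / (α k + β i) := by
  cases k with
  | zero =>
    cases m with
    | zero => simp [hP.zero_right]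
    | succ m =>
      rw [hP.zero_left _ _ m.succ_pos, if_pos rfl, hα0, eq_comm]
      exact prod_eq_one fun i hi => by rw [zero_add, div_self (hβ i (mem_Icc.mp hi).1)]
  | succ k =>
    induction m with
    | zero => simp [hP.zero_right]
    | succ m ihm =>
      rw [hP.step, hP.eq_zero_of_lt _ k.lt_succ_self, ihm, prod_Icc_succ_top (by omega)]
      ring

theorem eq_urnFormula (hP : UrnRecurrence α β P) (hα0 : α 0 = 0)
    (hαβ : ∀ j l, 1 ≤ l → α j + β l ≠ 0) (hβ : Set.InjOn β (Set.Ici 1)) {n m k : ℕ}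
    (hkn : k ≤ n) (hm : 1 ≤ m ∨ k < n) : P n m k = urnFormula α β n m k := by
  induction n, hkn using Nat.le_induction generalizing m with
  | base =>
    have hm : 1 ≤ m := hm.resolve_right (lt_irrefl k)
    rw [hP.apply_self hα0 (fun i hi => by simpa [hα0] using hαβ 0 i hi),
      urnFormula_self hm k (fun l hl => hαβ k l (mem_Icc.mp hl).1)
        (hβ.mono fun i hi => (mem_Icc.mp hi).1)]
  | succ n hkn ih =>
    induction m with
    | zero => rw [hP.zero_right, if_neg (by omega)]; simp [urnFormula, urnSum]
    | succ m ihm =>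
      have hβm : ∀ l ∈ Icc 1 m, β l ≠ β (m + 1) := fun l hl =>
        hβ.ne (mem_Icc.mp hl).1 m.succ_pos (by have := (mem_Icc.mp hl).2; omega)
      rw [hP.step, ih (Or.inl m.succ_pos), ihm (Or.inr (by omega)),
        urnFormula_succ_succ hkn hαβ hβm]

end UrnRecurrence

theorem urn_model_I_pmf_general (α β : ℕ → ℝ) (hα0 : α 0 = 0)
    (hα : ∀ i, 1 ≤ i → 0 < α i) (hβ : ∀ i, 1 ≤ i → 0 < β i)
    (hβdist : ∀ i j, 1 ≤ i → 1 ≤ j → i ≠ j → β i ≠ β j)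
    (P : ℕ → ℕ → ℕ → ℝ)
    (hPrec : ∀ n m k, 1 ≤ n → 1 ≤ m →
      P n m k = (α n / (α n + β m)) * P (n - 1) m k +
        (β m / (α n + β m)) * P n (m - 1) k)
    (hP0 : ∀ n k, P n 0 k = if k = n then 1 else 0)
    (hP0' : ∀ m k, 1 ≤ m → P 0 m k = if k = 0 then 1 else 0) :
    ∀ n m k, 1 ≤ n → 1 ≤ m → k ≤ n →
      P n m k = (∏ h ∈ Finset.Icc 1 m, β h) * (∏ h ∈ Finset.Icc (k + 1) n, α h) *
        ∑ l ∈ Finset.Icc 1 m,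
          1 / ((∏ j ∈ Finset.Icc k n, (α j + β l)) *
            ∏ i ∈ (Finset.Icc 1 m).erase l, (β i - β l)) := by
  intro n m k _ hm hkn
  have hP : UrnRecurrence α β P :=
    ⟨fun n m k => hPrec (n + 1) (m + 1) k n.succ_pos m.succ_pos, hP0, hP0'⟩
  have hαβ : ∀ j l, 1 ≤ l → α j + β l ≠ 0 := by
    intro j l hl
    have hαj : 0 ≤ α j := by
      rcases j with _ | j
      · exact hα0.ge
      · exact (hα _ j.succ_pos).le
    exact (add_pos_of_nonneg_of_pos hαj (hβ l hl)).ne'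
  have hβinj : Set.InjOn β (Set.Ici 1) := fun i hi j hj hij =>
    by_contra fun hne => hβdist i j hi hj hne hij
  exact hP.eq_urnFormula hα0 hαβ hβinj hkn (Or.inl hm)

/-- Explicit formula for the probability mass function in urn model I
(sampling without replacement with general weights). -/
theorem urn_model_I_pmf (α β : ℕ → ℝ) (hα0 : α 0 = 0)
    (hα : ∀ i, 1 ≤ i → 0 < α i) (hβ : ∀ i, 1 ≤ i → 0 < β i)
    (hαdist : ∀ i j, i ≠ j → α i ≠ α j)
    (hβdist : ∀ i j, 1 ≤ i → 1 ≤ j → i ≠ j → β i ≠ β j)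
    (P : ℕ → ℕ → ℕ → ℝ)
    (hPrec : ∀ n m k, 1 ≤ n → 1 ≤ m →
      P n m k = (α n / (α n + β m)) * P (n - 1) m k +
        (β m / (α n + β m)) * P n (m - 1) k)
    (hP0 : ∀ n k, P n 0 k = if k = n then 1 else 0)
    (hP0' : ∀ m k, 1 ≤ m → P 0 m k = if k = 0 then 1 else 0) :
    ∀ n m k, 1 ≤ n → 1 ≤ m → k ≤ n →
      P n m k = (∏ h ∈ Finset.Icc 1 m, β h) * (∏ h ∈ Finset.Icc (k + 1) n, α h) *
        ∑ l ∈ Finset.Icc 1 m,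
          1 / ((∏ j ∈ Finset.Icc k n, (α j + β l)) *
            ∏ i ∈ (Finset.Icc 1 m).erase l, (β i - β l)) :=
  urn_model_I_pmf_general α β hα0 hα hβ hβdist P hPrec hP0 hP0'
end

section
/- Under the hypotheses of the previous theorem, the two explicit expressions for the urn model I probability agree: (∏_{h=1}^{m} β_h)·(∏_{h=k+1}^{n} α_h)·Σ_{ℓ=1}^{m} 1/((∏_{j=k}^{n}(α_j+β_ℓ))·(∏_{i=1, i≠ℓ}^{m}(β_i-β_ℓ))) = (∏_{h=1}^{m} β_h)·(∏_{h=k+1}^{n} α_h)·Σ_{ℓ=k}^{n} 1/((∏_{j=k, j≠ℓ}^{n}(α_j-α_ℓ))·(∏_{i=1}^{m}(β_i+α_ℓ))). -/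
/-!
Up to a common sign, the two sums are the residues of `1 / (∏ i (z - β i) * ∏ j (z + α j))` at its
poles `β i` and `-α j`, which are pairwise distinct by positivity. The residues sum to zero: for
at least two distinct nodes `v i`, `∑ i 1 / ∏ j ≠ i (v i - v j)` is the coefficient of
`X ^ (#nodes - 1)` in the Lagrange interpolant of the constant `1`, which is `0`.
-/

open Finset

theorem sum_one_div_prod_erase_sub_eq_zero {F ι : Type*} [Field F] [DecidableEq ι]
    {s : Finset ι} {v : ι → F} (hvs : Set.InjOn v s) (hs : 2 ≤ #s) :
    ∑ i ∈ s, 1 / ∏ j ∈ s.erase i, (v i - v j) = 0 := by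
  have h := Lagrange.coeff_eq_sum hvs (P := 1)
    (by rw [Polynomial.degree_one]; exact_mod_cast (by omega : 0 < #s))
  simpa [Polynomial.coeff_one, show #s - 1 ≠ 0 by omega] using h.symm

namespace Finset

variable {ι κ : Type*} [DecidableEq ι] [DecidableEq κ]

theorem disjSum_erase_inl (s : Finset ι) (t : Finset κ) (i : ι) :
    (s.disjSum t).erase (.inl i) = (s.erase i).disjSum t := by
  ext (x | x) <;> simp

theorem disjSum_erase_inr (s : Finset ι) (t : Finset κ) (j : κ) :
    (s.disjSum t).erase (.inr j) = s.disjSum (t.erase j) := by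
  ext (x | x) <;> simp

end Finset

theorem prod_sub_comm {ι R : Type*} [CommRing R] (s : Finset ι) (x y : ι → R) :
    ∏ i ∈ s, (x i - y i) = (-1) ^ #s * ∏ i ∈ s, (y i - x i) := by
  rw [← prod_neg]; simp

theorem sum_residues_left_eq_sum_residues_right {F ι κ : Type*} [Field F] [DecidableEq ι]
    [DecidableEq κ] {s : Finset ι} {t : Finset κ} {b : ι → F} {a : κ → F}
    (hb : Set.InjOn b s) (ha : Set.InjOn a t) (hab : ∀ i ∈ s, ∀ j ∈ t, b i + a j ≠ 0)
    (hs : s.Nonempty) (ht : t.Nonempty) :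
    ∑ l ∈ s, 1 / ((∏ j ∈ t, (a j + b l)) * ∏ i ∈ s.erase l, (b i - b l)) =
      ∑ l ∈ t, 1 / ((∏ j ∈ t.erase l, (a j - a l)) * ∏ i ∈ s, (b i + a l)) := by
  have hv : Set.InjOn (Sum.elim b (-a)) (s.disjSum t) := by
    rintro (i | j) hx (i' | j') hy h
    · simp_all [hb.eq_iff]
    · exact absurd (eq_neg_iff_add_eq_zero.mp h)
        (hab i (by simpa using hx) j' (by simpa using hy))
    · exact absurd (eq_neg_iff_add_eq_zero.mp h.symm)
        (hab i' (by simpa using hy) j (by simpa using hx))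
    · simp_all [ha.eq_iff]
  have hcard : 2 ≤ #(s.disjSum t) := by
    rw [card_disjSum]; have := hs.card_pos; have := ht.card_pos; omega
  have key := sum_one_div_prod_erase_sub_eq_zero hv hcard
  rw [sum_disjSum] at key
  simp only [disjSum_erase_inl, disjSum_erase_inr, prod_disjSum, Sum.elim_inl, Sum.elim_inr,
    Pi.neg_apply] at key
  have hsign : (-1 : F) ^ #s = -(-1) ^ (#s - 1) := by
    rw [← pow_sub_one_mul hs.card_pos.ne', mul_neg_one]
  have hleft : ∀ l ∈ s, 1 / ((∏ i ∈ s.erase l, (b l - b i)) * ∏ j ∈ t, (b l - -a j)) =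
      (-1) ^ (#s - 1) * (1 / ((∏ j ∈ t, (a j + b l)) * ∏ i ∈ s.erase l, (b i - b l))) := by
    intro l hl
    have ht' : ∏ j ∈ t, (b l - -a j) = ∏ j ∈ t, (a j + b l) := prod_congr rfl fun j _ => by ring
    rw [prod_sub_comm, card_erase_of_mem hl, ht']
    simp only [one_div, mul_inv, ← inv_pow, inv_neg_one]
    ring
  have hright : ∀ l ∈ t, 1 / ((∏ i ∈ s, (-a l - b i)) * ∏ j ∈ t.erase l, (-a l - -a j)) =
      -(-1) ^ (#s - 1) * (1 / ((∏ j ∈ t.erase l, (a j - a l)) * ∏ i ∈ s, (b i + a l))) := by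
    intro l _
    have hs' : ∏ i ∈ s, (-a l - b i) = (-1) ^ #s * ∏ i ∈ s, (b i + a l) := by
      rw [← prod_neg]; exact prod_congr rfl fun i _ => by ring
    have ht' : ∏ j ∈ t.erase l, (-a l - -a j) = ∏ j ∈ t.erase l, (a j - a l) :=
      prod_congr rfl fun j _ => by ring
    rw [hs', ht', hsign]
    simp only [one_div, mul_inv, inv_neg, ← inv_pow]
    ring
  rw [sum_congr rfl hleft, sum_congr rfl hright, ← mul_sum, ← mul_sum, neg_mul,
    ← sub_eq_add_neg, ← mul_sub] at key
  exact sub_eq_zero.mp ((mul_eq_zero.mp key).resolve_left (by simp))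

theorem urn_model_I_two_forms_general (α β : ℕ → ℝ) (hα0 : α 0 = 0)
    (hα : ∀ i, 1 ≤ i → 0 < α i) (hβ : ∀ i, 1 ≤ i → 0 < β i)
    (hαdist : ∀ i j, i ≠ j → α i ≠ α j)
    (hβdist : ∀ i j, 1 ≤ i → 1 ≤ j → i ≠ j → β i ≠ β j)
    (n m k : ℕ) (hm : 1 ≤ m) (hk : k ≤ n) :
    (∏ h ∈ Finset.Icc 1 m, β h) * (∏ h ∈ Finset.Icc (k + 1) n, α h) *
        ∑ l ∈ Finset.Icc 1 m,
          1 / ((∏ j ∈ Finset.Icc k n, (α j + β l)) *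
            ∏ i ∈ (Finset.Icc 1 m).erase l, (β i - β l)) =
      (∏ h ∈ Finset.Icc 1 m, β h) * (∏ h ∈ Finset.Icc (k + 1) n, α h) *
        ∑ l ∈ Finset.Icc k n,
          1 / ((∏ j ∈ (Finset.Icc k n).erase l, (α j - α l)) *
            ∏ i ∈ Finset.Icc 1 m, (β i + α l)) := by
  have hα_nonneg (j : ℕ) : 0 ≤ α j := by
    rcases j.eq_zero_or_pos with rfl | hj
    exacts [hα0.ge, (hα j hj).le]
  have hβ_inj : Set.InjOn β (Icc 1 m) := fun i hi j hj =>
    not_imp_not.mp (hβdist i j (mem_Icc.mp hi).1 (mem_Icc.mp hj).1)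
  have hα_inj : Set.InjOn α (Icc k n) := fun i _ j _ => not_imp_not.mp (hαdist i j)
  have hβα (i) (hi : i ∈ Icc 1 m) (j) (_ : j ∈ Icc k n) : β i + α j ≠ 0 :=
    (add_pos_of_pos_of_nonneg (hβ i (mem_Icc.mp hi).1) (hα_nonneg j)).ne'
  rw [sum_residues_left_eq_sum_residues_right hβ_inj hα_inj hβα (nonempty_Icc.mpr hm)
    (nonempty_Icc.mpr hk)]

/-- Equality of the two explicit expressions for the urn model I probability. -/
theorem urn_model_I_two_forms (α β : ℕ → ℝ) (hα0 : α 0 = 0)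
    (hα : ∀ i, 1 ≤ i → 0 < α i) (hβ : ∀ i, 1 ≤ i → 0 < β i)
    (hαdist : ∀ i j, i ≠ j → α i ≠ α j)
    (hβdist : ∀ i j, 1 ≤ i → 1 ≤ j → i ≠ j → β i ≠ β j)
    (n m k : ℕ) (hn : 1 ≤ n) (hm : 1 ≤ m) (hk : k ≤ n) :
    (∏ h ∈ Finset.Icc 1 m, β h) * (∏ h ∈ Finset.Icc (k + 1) n, α h) *
        ∑ l ∈ Finset.Icc 1 m,
          1 / ((∏ j ∈ Finset.Icc k n, (α j + β l)) *
            ∏ i ∈ (Finset.Icc 1 m).erase l, (β i - β l)) =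
      (∏ h ∈ Finset.Icc 1 m, β h) * (∏ h ∈ Finset.Icc (k + 1) n, α h) *
        ∑ l ∈ Finset.Icc k n,
          1 / ((∏ j ∈ (Finset.Icc k n).erase l, (α j - α l)) *
            ∏ i ∈ Finset.Icc 1 m, (β i + α l)) :=
  urn_model_I_two_forms_general α β hα0 hα hβ hαdist hβdist n m k hm hk
end

section
/- For the urn model I with weights α_n = n and β_m = m², the probability mass function admits two equal explicit forms: 2·Σ_{ℓ=1}^{m}(-1)^{ℓ-1}·C(k+ℓ²-1, k)·C(m,ℓ)/(C(n+ℓ², n)·C(m+ℓ, m)) = Σ_{ℓ=k}^{n}(-1)^{ℓ-k}·C(n,ℓ)·C(ℓ,k)·∏_{j=1}^{m} j²/(j²+ℓ), for n, m ≥ 1 and 0 ≤ k ≤ n. -/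
/-!
Both forms are partial-fraction expansions. Lagrange interpolation of the constant `1` gives
`(∏ i, (x - vᵢ))⁻¹ = ∑ i, wᵢ / (x - vᵢ)` with nodal weights `wᵢ = ∏_{j ≠ i} (vᵢ - vⱼ)⁻¹`.
For the nodes `-1², …, -m²` this expands `∏_{j=1}^m j² / (j² + x)` as
`∑_ℓ 2 (-1)^(ℓ-1) ℓ² C(m,ℓ) / (C(m+ℓ,m) (ℓ² + x))`. Inserting it into the second form and
exchanging the sums leaves, for each `ℓ`, an alternating binomial sum in `1 / (ℓ² + l)`, which
the same formula for the nodes `-k, …, -n` evaluates to `C(k+ℓ²-1,k) / (ℓ² C(n+ℓ²,n))`.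
-/

open Finset Nat

theorem Lagrange.sum_nodalWeight_mul_inv_sub {F ι : Type*} [Field F] [DecidableEq ι]
    {s : Finset ι} {v : ι → F} {x : F} (hvs : Set.InjOn v s) (hs : s.Nonempty)
    (hx : ∀ i ∈ s, x ≠ v i) :
    ∑ i ∈ s, nodalWeight s v i * (x - v i)⁻¹ = (∏ i ∈ s, (x - v i))⁻¹ := by
  have h := eval_interpolate_not_at_node 1 hx
  rw [interpolate_one hvs hs, Polynomial.eval_one, eval_nodal] at h
  simp only [Pi.one_apply, mul_one] at h
  exact eq_inv_of_mul_eq_one_right h.symm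

theorem prod_Ioc_natCast_sub {R : Type*} [CommRing R] {i b : ℕ} (hib : i ≤ b) :
    ∏ j ∈ Ioc i b, ((j : R) - i) = (b - i)! := by
  induction b, hib using Nat.le_induction with
  | base => simp
  | succ b hib ih =>
    rw [prod_Ioc_succ_top (by omega), ih, Nat.succ_sub hib, Nat.factorial_succ]
    push_cast [Nat.cast_sub hib]
    ring

theorem prod_Ico_natCast_sub {R : Type*} [CommRing R] (a d : ℕ) :
    ∏ j ∈ Ico a (a + d), ((j : R) - (a + d : ℕ)) = (-1) ^ d * d ! := by
  induction d generalizing a with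
  | zero => simp
  | succ d ih =>
    rw [prod_eq_prod_Ico_succ_bot (by omega), show a + (d + 1) = a + 1 + d by omega, ih,
      Nat.factorial_succ]
    push_cast
    ring

theorem prod_erase_Icc_natCast_sub {R : Type*} [CommRing R] {a b i : ℕ} (hai : a ≤ i)
    (hib : i ≤ b) :
    ∏ j ∈ (Icc a b).erase i, ((j : R) - i) = (-1) ^ (i - a) * (i - a)! * (b - i)! := by
  have hsplit : (Icc a b).erase i = Ico a i ∪ Ioc i b := by
    ext j; simp only [mem_erase, mem_Icc, mem_union, mem_Ico, mem_Ioc]; omega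
  have hdisj : Disjoint (Ico a i) (Ioc i b) :=
    disjoint_left.2 fun j hj hj' => by simp only [mem_Ico, mem_Ioc] at hj hj'; omega
  have hIco := prod_Ico_natCast_sub (R := R) a (i - a)
  rw [Nat.add_sub_cancel' hai] at hIco
  rw [hsplit, prod_union hdisj, hIco, prod_Ioc_natCast_sub hib]

theorem factorial_mul_prod_Icc_add {c k n : ℕ} (hck : 1 ≤ c + k) (hkn : k ≤ n) :
    (c + k - 1)! * ∏ j ∈ Icc k n, (c + j) = (c + n)! := by
  induction n, hkn using Nat.le_induction with
  | base => rw [Icc_self, prod_singleton, mul_comm, Nat.mul_factorial_pred (by omega)]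
  | succ n hkn ih =>
    rw [prod_Icc_succ_top (by omega), ← mul_assoc, ih, ← add_assoc, Nat.factorial_succ, mul_comm]

theorem Lagrange.nodalWeight_Icc_neg_natCast {F : Type*} [Field F] {k n l : ℕ} (hkl : k ≤ l)
    (hln : l ≤ n) :
    nodalWeight (Icc k n) (fun j : ℕ => -(j : F)) l =
      ((-1 : F) ^ (l - k) * (l - k)! * (n - l)!)⁻¹ := by
  rw [nodalWeight, prod_inv_distrib, ← prod_erase_Icc_natCast_sub hkl hln]
  congr 1
  exact prod_congr rfl fun j _ => by ring

theorem sum_Icc_neg_one_pow_mul_choose_mul_choose_div {k n : ℕ} (hk : k ≤ n) {y : ℝ}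
    (hy : ∀ j ∈ Icc k n, y + j ≠ 0) :
    ∑ l ∈ Icc k n, (-1) ^ (l - k) * (n.choose l : ℝ) * (l.choose k : ℝ) / (y + l) =
      n ! / (k ! * ∏ j ∈ Icc k n, (y + j)) := by
  have hinj : Set.InjOn (fun j : ℕ => -(j : ℝ)) (Icc k n) :=
    fun i _ j _ h => by simpa using h
  have key := Lagrange.sum_nodalWeight_mul_inv_sub hinj (nonempty_Icc.2 hk)
    (x := y) fun j hj h => hy j hj (by simp [h])
  simp only [sub_neg_eq_add] at key
  rw [div_mul_eq_div_div, div_eq_mul_inv _ (∏ j ∈ Icc k n, (y + j)), ← key, mul_sum]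
  refine sum_congr rfl fun l hl => ?_
  obtain ⟨hkl, hln⟩ := mem_Icc.1 hl
  rw [Lagrange.nodalWeight_Icc_neg_natCast hkl hln, Nat.cast_choose ℝ hln, Nat.cast_choose ℝ hkl]
  have hsign : ((-1 : ℝ) ^ (l - k)) ^ 2 = 1 := by rw [← pow_mul, mul_comm, pow_mul]; simp
  have := hy l hl
  field_simp
  exact hsign

theorem sum_Icc_neg_one_pow_mul_choose_mul_choose_div_natCast {k n y : ℕ} (hk : k ≤ n)
    (hy : 1 ≤ y) :
    ∑ l ∈ Icc k n, (-1) ^ (l - k) * (n.choose l : ℝ) * (l.choose k : ℝ) / (y + l) =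
      ((k + y - 1).choose k : ℝ) / (y * (n + y).choose n) := by
  rw [sum_Icc_neg_one_pow_mul_choose_mul_choose_div hk fun j _ => by positivity]
  have hprod : ((k + y - 1)! : ℝ) * ∏ j ∈ Icc k n, ((y : ℝ) + j) = (n + y)! := by
    rw [add_comm k, add_comm n]
    exact_mod_cast factorial_mul_prod_Icc_add (by omega) hk
  rw [Nat.cast_choose ℝ (by omega : k ≤ k + y - 1), Nat.cast_choose ℝ (by omega : n ≤ n + y),
    show k + y - 1 - k = y - 1 by omega, show n + y - n = y by omega, ← hprod]
  rw [← Nat.mul_factorial_pred (by omega : y ≠ 0)]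
  have : ∏ j ∈ Icc k n, ((y : ℝ) + j) ≠ 0 := prod_ne_zero_iff.2 fun j _ => by positivity
  field_simp
  push_cast
  ring

theorem Lagrange.sq_factorial_mul_nodalWeight_Icc_neg_sq {m l : ℕ} (hl : l ∈ Icc 1 m) :
    (m ! : ℝ) ^ 2 * nodalWeight (Icc 1 m) (fun j : ℕ => -(j : ℝ) ^ 2) l =
      2 * (-1) ^ (l - 1) * (l : ℝ) ^ 2 * m.choose l / (m + l).choose m := by
  obtain ⟨h1l, hlm⟩ := mem_Icc.1 hl
  have hsub := prod_erase_Icc_natCast_sub (R := ℝ) h1l hlm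
  have hadd : (l ! : ℝ) * ((l + l) * ∏ j ∈ (Icc 1 m).erase l, ((j : ℝ) + l)) = (l + m)! := by
    rw [mul_prod_erase (Icc 1 m) (fun j : ℕ => (j : ℝ) + l) hl]
    have h := factorial_mul_prod_Icc_add (c := l) (by omega) (by omega : 1 ≤ m)
    rw [Nat.add_sub_cancel] at h
    simp only [add_comm (_ : ℝ) (l : ℝ)]
    exact_mod_cast h
  have hfactor : ∏ j ∈ (Icc 1 m).erase l, (-(l : ℝ) ^ 2 - -(j : ℝ) ^ 2) =
      (∏ j ∈ (Icc 1 m).erase l, ((j : ℝ) - l)) * ∏ j ∈ (Icc 1 m).erase l, ((j : ℝ) + l) := by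
    rw [← prod_mul_distrib]
    exact prod_congr rfl fun j _ => by ring
  rw [nodalWeight, prod_inv_distrib, hfactor, hsub, Nat.cast_choose ℝ hlm,
    Nat.cast_choose ℝ (by omega : m ≤ m + l), show m + l - m = l by omega, add_comm m l, ← hadd]
  have hsign : ((-1 : ℝ) ^ (l - 1)) ^ 2 = 1 := by rw [← pow_mul, mul_comm, pow_mul]; simp
  rw [← Nat.mul_factorial_pred (by omega : l ≠ 0)]
  field_simp
  rw [hsign]
  push_cast
  ring

theorem prod_Icc_sq_div_sq_add_eq_sum {m : ℕ} (hm : 1 ≤ m) {x : ℝ}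
    (hx : ∀ j ∈ Icc 1 m, (j : ℝ) ^ 2 + x ≠ 0) :
    ∏ j ∈ Icc 1 m, ((j : ℝ) ^ 2 / ((j : ℝ) ^ 2 + x)) =
      ∑ l ∈ Icc 1 m, 2 * (-1) ^ (l - 1) * (l : ℝ) ^ 2 * m.choose l / (m + l).choose m /
        ((l : ℝ) ^ 2 + x) := by
  have hinj : Set.InjOn (fun j : ℕ => -(j : ℝ) ^ 2) (Icc 1 m) :=
    fun i _ j _ h => by simpa using h
  have key := Lagrange.sum_nodalWeight_mul_inv_sub hinj (nonempty_Icc.2 hm)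
    (x := x) fun j hj h => hx j hj (by rw [h]; ring)
  have hfact : ∏ j ∈ Icc 1 m, (j : ℝ) ^ 2 = (m ! : ℝ) ^ 2 := by
    have h : ∏ j ∈ Icc 1 m, j = m ! := by
      simpa using factorial_mul_prod_Icc_add (c := 0) le_rfl hm
    rw [prod_pow, ← h, Nat.cast_prod]
  rw [prod_div_distrib, hfact, div_eq_mul_inv]
  simp only [sub_neg_eq_add, add_comm x] at key
  rw [← key, mul_sum]
  refine sum_congr rfl fun l hl => ?_
  rw [← mul_assoc, Lagrange.sq_factorial_mul_nodalWeight_Icc_neg_sq hl]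
  field_simp

theorem theta_urn_pmf_two_forms_general (n m k : ℕ) (hm : 1 ≤ m) (hk : k ≤ n) :
    2 * ∑ l ∈ Finset.Icc 1 m, (-1 : ℝ) ^ (l - 1) *
          ((k + l ^ 2 - 1).choose k : ℝ) * (m.choose l : ℝ) /
          (((n + l ^ 2).choose n : ℝ) * ((m + l).choose m : ℝ)) =
      ∑ l ∈ Finset.Icc k n, (-1 : ℝ) ^ (l - k) *
          (n.choose l : ℝ) * (l.choose k : ℝ) *
          ∏ j ∈ Finset.Icc 1 m, ((j : ℝ) ^ 2 / ((j : ℝ) ^ 2 + l)) := by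
  symm
  calc _ = ∑ l ∈ Icc k n, ∑ i ∈ Icc 1 m, (-1 : ℝ) ^ (l - k) * n.choose l * l.choose k *
        (2 * (-1) ^ (i - 1) * (i : ℝ) ^ 2 * m.choose i / (m + i).choose m /
          ((i : ℝ) ^ 2 + l)) := by
        refine sum_congr rfl fun l _ => ?_
        rw [prod_Icc_sq_div_sq_add_eq_sum hm fun j hj => ?_, mul_sum]
        have := (mem_Icc.1 hj).1
        positivity
    _ = ∑ i ∈ Icc 1 m, 2 * (-1) ^ (i - 1) * (i : ℝ) ^ 2 * m.choose i / (m + i).choose m *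
        ∑ l ∈ Icc k n, (-1 : ℝ) ^ (l - k) * n.choose l * l.choose k / ((i ^ 2 : ℕ) + l) := by
        rw [sum_comm]
        refine sum_congr rfl fun i _ => ?_
        rw [mul_sum]
        refine sum_congr rfl fun l _ => ?_
        push_cast
        ring
    _ = _ := by
        rw [mul_sum]
        refine sum_congr rfl fun i hi => ?_
        have hi1 : 1 ≤ i := (mem_Icc.1 hi).1
        rw [sum_Icc_neg_one_pow_mul_choose_mul_choose_div_natCast hk (Nat.one_le_pow _ _ hi1)]
        have : (i : ℝ) ≠ 0 := by positivity
        push_cast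
        field_simp

/-- The two explicit forms of the probability mass function for urn model I
with weights `α_n = n` and `β_m = m²` agree. -/
theorem theta_urn_pmf_two_forms (n m k : ℕ) (hn : 1 ≤ n) (hm : 1 ≤ m) (hk : k ≤ n) :
    2 * ∑ l ∈ Finset.Icc 1 m, (-1 : ℝ) ^ (l - 1) *
          ((k + l ^ 2 - 1).choose k : ℝ) * (m.choose l : ℝ) /
          (((n + l ^ 2).choose n : ℝ) * ((m + l).choose m : ℝ)) =
      ∑ l ∈ Finset.Icc k n, (-1 : ℝ) ^ (l - k) *
          (n.choose l : ℝ) * (l.choose k : ℝ) *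
          ∏ j ∈ Finset.Icc 1 m, ((j : ℝ) ^ 2 / ((j : ℝ) ^ 2 + l)) :=
  theta_urn_pmf_two_forms_general n m k hm hk
end

section
/- Let P{X_{n,m}=k} = 2·Σ_{ℓ=1}^{m}(-1)^{ℓ-1}·C(k+ℓ²-1, k)·C(m,ℓ)/(C(n+ℓ², n)·C(m+ℓ, m)) for 0 ≤ k ≤ n. Then the s-th factorial moment satisfies Σ_{k=0}^{n} (k)_s·P{X_{n,m}=k} = (n)_s·∏_{ℓ=1}^{m} ℓ²/(ℓ²+s), for every positive integer s. -/
/-!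
After swapping the two sums, the inner sum for each `l` is `∑ₖ (k)ₛ C(k+a-1, k)` with `a = l²`,
which equals `(n)ₛ · a / (a + s) · C(n+a, n)` (induction on `n` via Pascal's rule). What remains is
`2 ∑ₗ (-1)^(l-1) C(m,l) / C(m+l,m) · l² / (l² + x) = ∏ₗ l² / (l² + x)`, the partial-fraction
expansion of the right-hand side in `x`. It goes by induction on `m`: from `m` to `m + 1` each weight
gets multiplied by `(m+1)² / ((m+1)² - l²)`, and the leftover terms cancel because
`∑ₗ (-1)^(l-1) C(m,l) / C(m+l,m) · l² = 0` for `m ≥ 2`. Up to the factor `C(2m,m)` this is the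
`2m`-th finite difference of `(k - m)²`, folded in half by the symmetry of the binomial coefficients.
-/

open Finset

section FallingFactorial

variable {R : Type*} [CommRing R]

theorem prod_range_succ_add_one_sub (x : R) (t : ℕ) :
    ∏ i ∈ range (t + 1), (x + 1 - i) = (x + 1) * ∏ i ∈ range t, (x - i) := by
  rw [prod_range_succ', mul_comm]
  congr 1
  · simp
  · exact prod_congr rfl fun i _ => by push_cast; ring

theorem prod_range_succ_add_one_sub_sub (x : R) (t : ℕ) :
    ∏ i ∈ range (t + 1), (x + 1 - i) - ∏ i ∈ range (t + 1), (x - i) =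
      (t + 1) * ∏ i ∈ range t, (x - i) := by
  rw [prod_range_succ_add_one_sub, prod_range_succ]
  ring

theorem mul_sum_range_prod_sub_mul_choose (a s n : ℕ) :
    ((a : R) + s) *
        ∑ k ∈ range (n + 1), (∏ i ∈ range s, ((k : R) - i)) * ((k + a - 1).choose k : R) =
      a * (∏ i ∈ range s, ((n : R) - i)) * ((n + a).choose n : R) := by
  induction n with
  | zero =>
    cases s with
    | zero => simp
    | succ t => simp [prod_range_succ']
  | succ n ih =>
    have hpascal :
        ((n + 1 + a).choose (n + 1) : R) = (n + a).choose n + (n + a).choose (n + 1) := by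
      rw [show n + 1 + a = n + a + 1 by ring, Nat.choose_succ_succ', Nat.cast_add]
    have habsorb : ((n : R) + 1) * (n + a).choose (n + 1) = a * (n + a).choose n := by
      have h := Nat.choose_succ_right_eq (n + a) n
      rw [Nat.add_sub_cancel_left] at h
      have h' := congrArg (Nat.cast : ℕ → R) h
      push_cast at h'
      linear_combination h'
    have hfalling : (s : R) * (∏ i ∈ range s, ((n : R) + 1 - i)) * (n + a).choose (n + 1) =
        a * (∏ i ∈ range s, ((n : R) + 1 - i) - ∏ i ∈ range s, ((n : R) - i)) * (n + a).choose n := by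
      cases s with
      | zero => simp
      | succ t =>
        rw [prod_range_succ_add_one_sub_sub, prod_range_succ_add_one_sub]
        push_cast
        linear_combination ((t : R) + 1) * (∏ i ∈ range t, ((n : R) - i)) * habsorb
    rw [sum_range_succ, mul_add, ih, show n + 1 + a - 1 = n + a by omega, hpascal]
    push_cast
    linear_combination hfalling

end FallingFactorial

theorem sum_range_prod_sub_mul_choose_eq {K : Type*} [Field K] {a s : ℕ} (h : (a : K) + s ≠ 0)
    (n : ℕ) :
    ∑ k ∈ range (n + 1), (∏ i ∈ range s, ((k : K) - i)) * ((k + a - 1).choose k : K) =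
      (∏ i ∈ range s, ((n : K) - i)) * (a / (a + s)) * (n + a).choose n := by
  rw [mul_div_assoc', div_mul_eq_mul_div, eq_div_iff h]
  linear_combination mul_sum_range_prod_sub_mul_choose (R := K) a s n

theorem sum_range_neg_one_pow_mul_choose_mul_pow_eq_zero {R : Type*} [CommRing R] {j N : ℕ}
    (h : j < N) (y : R) :
    ∑ k ∈ range (N + 1), (-1) ^ (N - k) * (N.choose k : R) * (y + k) ^ j = 0 := by
  have := congrFun (fwdDiff_iter_pow_eq_zero_of_lt (R := R) h) y
  simpa [fwdDiff_iter_eq_sum_shift, zsmul_eq_mul] using this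

theorem sum_range_two_mul_add_one_of_symm {M : Type*} [AddCommMonoid M] (f : ℕ → M) (c : ℕ)
    (hf : ∀ l ≤ c, f (c - l) = f (c + l)) :
    ∑ k ∈ range (2 * c + 1), f k = f c + 2 • ∑ l ∈ Icc 1 c, f (c + l) := by
  have hIcc : ∑ l ∈ Icc 1 c, f (c + l) = ∑ j ∈ range c, f (c + (j + 1)) := by
    rw [range_eq_Ico, sum_Ico_add' (fun l => f (c + l)), zero_add, Ico_add_one_right_eq_Icc]
  have hlow : ∑ k ∈ range c, f k = ∑ j ∈ range c, f (c + (j + 1)) := by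
    rw [← sum_range_reflect]
    refine sum_congr rfl fun j hj => ?_
    rw [← hf (j + 1) (mem_range.mp hj), Nat.sub_sub, add_comm 1 j]
  rw [show 2 * c + 1 = c + (c + 1) by ring, sum_range_add, sum_range_succ', hlow, hIcc, two_nsmul,
    add_zero]
  abel

theorem sum_Icc_neg_one_pow_mul_sq_mul_choose_eq_zero {c : ℕ} (hc : 2 ≤ c) :
    ∑ l ∈ Icc 1 c, (-1 : ℤ) ^ l * l ^ 2 * (2 * c).choose (c + l) = 0 := by
  set f : ℕ → ℤ := fun k => (-1) ^ (2 * c - k) * (2 * c).choose k * (-c + k) ^ 2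
  have hsymm : ∀ l ≤ c, f (c - l) = f (c + l) := by
    intro l hl
    have hsign : (-1 : ℤ) ^ (2 * c - (c - l)) = (-1) ^ (2 * c - (c + l)) := by
      rw [show 2 * c - (c - l) = 2 * c - (c + l) + 2 * l by omega, pow_add, pow_mul]
      simp
    have hchoose : (2 * c).choose (c - l) = (2 * c).choose (c + l) := by
      rw [← Nat.choose_symm (by omega : c + l ≤ 2 * c), show 2 * c - (c + l) = c - l by omega]
    simp only [f, hsign, hchoose, Nat.cast_sub hl, Nat.cast_add]
    ring
  have hzero := sum_range_neg_one_pow_mul_choose_mul_pow_eq_zero (by omega : 2 < 2 * c) (-c : ℤ)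
  rw [sum_range_two_mul_add_one_of_symm f c hsymm] at hzero
  have hterm : ∀ l ∈ Icc 1 c,
      f (c + l) = (-1) ^ c * ((-1 : ℤ) ^ l * l ^ 2 * (2 * c).choose (c + l)) := by
    intro l hl
    have hlc := (mem_Icc.mp hl).2
    have hsign : (-1 : ℤ) ^ (2 * c - (c + l)) = (-1) ^ c * (-1) ^ l := by
      rw [← pow_add, show 2 * c - (c + l) = c - l by omega, show c + l = c - l + 2 * l by omega,
        pow_add, pow_mul]
      simp
    simp only [f, hsign]
    push_cast
    ring
  rw [sum_congr rfl hterm, ← mul_sum] at hzero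
  simpa [f] using hzero

theorem choose_div_choose_add_eq_choose_two_mul_div (c l : ℕ) :
    (c.choose l : ℝ) / (c + l).choose c = (2 * c).choose (c + l) / (2 * c).choose c := by
  have h := Nat.choose_mul (n := 2 * c) (k := c + l) (s := c) (by omega)
  rw [show 2 * c - c = c by omega, Nat.add_sub_cancel_left] at h
  have h' := congrArg (Nat.cast : ℕ → ℝ) h
  push_cast at h'
  have h1 : ((c + l).choose c : ℝ) ≠ 0 := by exact_mod_cast (Nat.choose_pos (by omega)).ne'
  have h2 : ((2 * c).choose c : ℝ) ≠ 0 := by exact_mod_cast (Nat.choose_pos (by omega)).ne'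
  rw [div_eq_div_iff h1 h2]
  linear_combination -h'

theorem sum_Icc_neg_one_pow_mul_choose_div_choose_mul_sq_eq_zero {c : ℕ} (hc : 2 ≤ c) :
    ∑ l ∈ Icc 1 c, (-1 : ℝ) ^ (l - 1) * ((c.choose l : ℝ) / (c + l).choose c) * l ^ 2 = 0 := by
  have hterm : ∀ l ∈ Icc 1 c, (-1 : ℝ) ^ (l - 1) * ((c.choose l : ℝ) / (c + l).choose c) * l ^ 2 =
      -((2 * c).choose c : ℝ)⁻¹ * ((-1 : ℤ) ^ l * l ^ 2 * (2 * c).choose (c + l) : ℤ) := by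
    intro l hl
    obtain ⟨j, rfl⟩ := Nat.exists_eq_add_of_le' (mem_Icc.mp hl).1
    rw [choose_div_choose_add_eq_choose_two_mul_div, Nat.add_sub_cancel]
    push_cast
    ring
  rw [sum_congr rfl hterm, ← mul_sum, ← Int.cast_sum,
    sum_Icc_neg_one_pow_mul_sq_mul_choose_eq_zero hc]
  simp

theorem choose_div_choose_add_succ_mul (m l : ℕ) :
    ((m + 1).choose l : ℝ) / (m + 1 + l).choose (m + 1) * ((m + 1 - l) * (m + 1 + l)) =
      (m.choose l : ℝ) / (m + l).choose m * (m + 1) ^ 2 := by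
  rcases lt_or_ge (m + 1) l with hl | hl
  · simp [Nat.choose_eq_zero_of_lt hl, Nat.choose_eq_zero_of_lt (Nat.lt_of_succ_lt hl)]
  have hnum := congrArg (Nat.cast : ℕ → ℝ) (Nat.choose_mul_succ_eq m l)
  have hden := congrArg (Nat.cast : ℕ → ℝ) (Nat.add_one_mul_choose_eq (m + l) m)
  rw [show m + l + 1 = m + 1 + l by ring] at hden
  push_cast [Nat.cast_sub hl] at hnum hden
  have h1 : ((m + l).choose m : ℝ) ≠ 0 := by exact_mod_cast (Nat.choose_pos (by omega)).ne'
  have h2 : ((m + 1 + l).choose (m + 1) : ℝ) ≠ 0 := by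
    exact_mod_cast (Nat.choose_pos (by omega)).ne'
  rw [div_mul_eq_mul_div, div_mul_eq_mul_div, div_eq_div_iff h2 h1]
  linear_combination
    -(m + 1 + l : ℝ) * (m + l).choose m * hnum + (m.choose l : ℝ) * (m + 1) * hden

theorem two_mul_sum_Icc_neg_one_pow_mul_choose_div_choose_eq_prod {m : ℕ} (hm : 1 ≤ m) {x : ℝ}
    (hx : 0 ≤ x) :
    2 * ∑ l ∈ Icc 1 m, (-1 : ℝ) ^ (l - 1) * ((m.choose l : ℝ) / (m + l).choose m) *
        ((l : ℝ) ^ 2 / (l ^ 2 + x)) =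
      ∏ l ∈ Icc 1 m, (l : ℝ) ^ 2 / (l ^ 2 + x) := by
  induction m, hm using Nat.le_induction with
  | base =>
    have : (1 : ℝ) + x ≠ 0 := by positivity
    norm_num
    field_simp
  | succ m hm ih =>
    have hD : ((m : ℝ) + 1) ^ 2 + x ≠ 0 := by positivity
    -- `1 / ((l² + x) ((m+1)² + x)) = (1 / (l² + x) - 1 / ((m+1)² + x)) / ((m+1)² - l²)`
    have hsplit : ∀ l ∈ Icc 1 m,
        (-1 : ℝ) ^ (l - 1) * ((m.choose l : ℝ) / (m + l).choose m) * ((l : ℝ) ^ 2 / (l ^ 2 + x)) *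
          ((m + 1) ^ 2 / ((m + 1) ^ 2 + x)) =
        (-1 : ℝ) ^ (l - 1) * (((m + 1).choose l : ℝ) / (m + 1 + l).choose (m + 1)) *
            ((l : ℝ) ^ 2 / (l ^ 2 + x)) -
          (-1 : ℝ) ^ (l - 1) * (((m + 1).choose l : ℝ) / (m + 1 + l).choose (m + 1)) * l ^ 2 /
            ((m + 1) ^ 2 + x) := by
      intro l hl
      obtain ⟨hl1, hlm⟩ := mem_Icc.mp hl
      have hl0 : (0 : ℝ) < l := by exact_mod_cast hl1
      have hlt : (l : ℝ) < m + 1 := by exact_mod_cast Nat.lt_succ_of_le hlm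
      have hq : (l : ℝ) ^ 2 + x ≠ 0 := by positivity
      have hgap : ((m : ℝ) + 1 - l) * (m + 1 + l) ≠ 0 := by
        have : (0 : ℝ) < m + 1 - l := by linarith
        positivity
      have hrec : (m.choose l : ℝ) / (m + l).choose m =
          ((m + 1).choose l : ℝ) / (m + 1 + l).choose (m + 1) * ((m + 1 - l) * (m + 1 + l)) /
            (m + 1) ^ 2 := by
        rw [choose_div_choose_add_succ_mul m l]
        field_simp
      rw [hrec]
      field_simp
      ring
    have hvanish := sum_Icc_neg_one_pow_mul_choose_div_choose_mul_sq_eq_zero (by omega : 2 ≤ m + 1)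
    rw [sum_Icc_succ_top (by omega)] at hvanish
    rw [prod_Icc_succ_top (by omega), ← ih, sum_Icc_succ_top (by omega),
      mul_assoc (2 : ℝ) (∑ l ∈ Icc 1 m, _), sum_mul]
    push_cast at hvanish hsplit ⊢
    rw [sum_congr rfl hsplit, sum_sub_distrib, ← sum_div]
    linear_combination (2 / (((m : ℝ) + 1) ^ 2 + x)) * hvanish

theorem theta_urn_factorial_moments_general (n m s : ℕ) (hm : 1 ≤ m) :
    ∑ k ∈ Finset.range (n + 1),
        (∏ i ∈ Finset.range s, ((k : ℝ) - i)) *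
          (2 * ∑ l ∈ Finset.Icc 1 m, (-1 : ℝ) ^ (l - 1) *
            ((k + l ^ 2 - 1).choose k : ℝ) * (m.choose l : ℝ) /
            (((n + l ^ 2).choose n : ℝ) * ((m + l).choose m : ℝ))) =
      (∏ i ∈ Finset.range s, ((n : ℝ) - i)) *
        ∏ l ∈ Finset.Icc 1 m, ((l : ℝ) ^ 2 / ((l : ℝ) ^ 2 + s)) := by
  calc _ = 2 * ∑ l ∈ Icc 1 m, (-1 : ℝ) ^ (l - 1) * ((m.choose l : ℝ) / (m + l).choose m) /
          (n + l ^ 2).choose n *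
          ∑ k ∈ range (n + 1), (∏ i ∈ range s, ((k : ℝ) - i)) * ((k + l ^ 2 - 1).choose k : ℝ) := by
        simp only [mul_sum]
        rw [sum_comm]
        exact sum_congr rfl fun l _ => sum_congr rfl fun k _ => by ring
    _ = 2 * ∑ l ∈ Icc 1 m, (∏ i ∈ range s, ((n : ℝ) - i)) * ((-1 : ℝ) ^ (l - 1) *
          ((m.choose l : ℝ) / (m + l).choose m) * ((l : ℝ) ^ 2 / (l ^ 2 + s))) := by
        congr 1
        refine sum_congr rfl fun l hl => ?_
        have hl0 : (0 : ℝ) < l := by exact_mod_cast (mem_Icc.mp hl).1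
        have hpos : ((l ^ 2 : ℕ) : ℝ) + s ≠ 0 := by push_cast; positivity
        have hC : ((n + l ^ 2).choose n : ℝ) ≠ 0 := by
          exact_mod_cast (Nat.choose_pos (Nat.le_add_right n (l ^ 2))).ne'
        rw [sum_range_prod_sub_mul_choose_eq hpos]
        push_cast
        field_simp
    _ = _ := by
      rw [← mul_sum, mul_left_comm,
        two_mul_sum_Icc_neg_one_pow_mul_choose_div_choose_eq_prod hm (Nat.cast_nonneg s)]

/-- Factorial moments for urn model I with weights `α_n = n`, `β_m = m²`. -/
theorem theta_urn_factorial_moments (n m s : ℕ) (hn : 1 ≤ n) (hm : 1 ≤ m) (hs : 1 ≤ s) :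
    ∑ k ∈ Finset.range (n + 1),
        (∏ i ∈ Finset.range s, ((k : ℝ) - i)) *
          (2 * ∑ l ∈ Finset.Icc 1 m, (-1 : ℝ) ^ (l - 1) *
            ((k + l ^ 2 - 1).choose k : ℝ) * (m.choose l : ℝ) /
            (((n + l ^ 2).choose n : ℝ) * ((m + l).choose m : ℝ))) =
      (∏ i ∈ Finset.range s, ((n : ℝ) - i)) *
        ∏ l ∈ Finset.Icc 1 m, ((l : ℝ) ^ 2 / ((l : ℝ) ^ 2 + s)) :=
  theta_urn_factorial_moments_general n m s hm
end

section
/- For real s > 0, ∏_{ℓ=1}^{m} ℓ²/(ℓ²+s) = (m!)² / (Γ(m+1-i√s)·Γ(m+1+i√s)) · π√s/sinh(π√s), where i is the imaginary unit and Γ is the complex Gamma function. -/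
open Finset Real Complex

lemma gamma_shift_aux (z : ℂ) (hz : z.im ≠ 0) (m : ℕ) :
    Complex.Gamma ((m : ℂ) + 1 + z)
      = (∏ l ∈ Finset.Icc 1 m, ((l : ℂ) + z)) * Complex.Gamma (1 + z) := by
  induction m with
  | zero => simp
  | succ n ih =>
    have hne : (n : ℂ) + 1 + z ≠ 0 := by
      intro h
      apply hz
      have := congrArg Complex.im h
      simpa using this
    have hcast : ((n + 1 : ℕ) : ℂ) + 1 + z = ((n : ℂ) + 1 + z) + 1 := by push_cast; ring
    rw [hcast, Complex.Gamma_add_one _ hne, ih, Finset.prod_Icc_succ_top (by omega)]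
    push_cast; ring

lemma gamma_one_pm (x : ℝ) (hx : 0 < x) :
    Complex.Gamma (1 - Complex.I * x) * Complex.Gamma (1 + Complex.I * x)
      = ((Real.pi * x / Real.sinh (Real.pi * x) : ℝ) : ℂ) := by
  have hne : Complex.I * (x : ℂ) ≠ 0 := by
    simp [Complex.I_ne_zero, hx.ne']
  have h1 : Complex.Gamma (1 + Complex.I * x)
      = Complex.I * x * Complex.Gamma (Complex.I * x) := by
    have := Complex.Gamma_add_one _ hne
    rw [add_comm] at this
    exact this
  have hrefl := Complex.Gamma_mul_Gamma_one_sub (Complex.I * x)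
  have hsin : Complex.sin ((Real.pi : ℂ) * (Complex.I * x))
      = Complex.sinh ((Real.pi : ℂ) * x) * Complex.I := by
    rw [show (Real.pi : ℂ) * (Complex.I * x) = ((Real.pi : ℂ) * x) * Complex.I by ring,
      Complex.sin_mul_I]
  have hsinh_ne : Real.sinh (Real.pi * x) ≠ 0 := by
    have : 0 < Real.sinh (Real.pi * x) := by have : Real.sinh 0 < Real.sinh (Real.pi * x) := Real.sinh_lt_sinh.2 (by positivity); simpa using this
    exact this.ne'
  have hsinh_neC : ((Real.sinh (Real.pi * x) : ℝ) : ℂ) ≠ 0 := by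
    exact_mod_cast hsinh_ne
  calc Complex.Gamma (1 - Complex.I * x) * Complex.Gamma (1 + Complex.I * x)
      = Complex.I * x * (Complex.Gamma (Complex.I * x)
          * Complex.Gamma (1 - Complex.I * x)) := by rw [h1]; ring
    _ = Complex.I * x * ((Real.pi : ℂ) / Complex.sin ((Real.pi : ℂ) * (Complex.I * x))) := by
        rw [hrefl]
    _ = Complex.I * x * ((Real.pi : ℂ) / (Complex.sinh ((Real.pi : ℂ) * x) * Complex.I)) := by
        rw [hsin]
    _ = ((Real.pi * x / Real.sinh (Real.pi * x) : ℝ) : ℂ) := by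
        rw [show Complex.sinh ((Real.pi : ℂ) * (x : ℂ)) = ((Real.sinh (Real.pi * x) : ℝ) : ℂ) from by
          rw [Complex.ofReal_sinh, Complex.ofReal_mul]]
        have hS : Complex.sinh ((Real.pi : ℂ) * x) ≠ 0 := by
          rw [← Complex.ofReal_mul, ← Complex.ofReal_sinh]; exact hsinh_neC
        push_cast
        rw [mul_div_assoc', div_eq_div_iff (mul_ne_zero hS Complex.I_ne_zero) hS]
        ring

/-- Finite product formula in terms of the complex Gamma function. -/
theorem finite_product_gamma (m : ℕ) (hm : 1 ≤ m) (s : ℝ) (hs : 0 < s) :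
    ((∏ l ∈ Finset.Icc 1 m, ((l : ℝ) ^ 2 / ((l : ℝ) ^ 2 + s)) : ℝ) : ℂ) =
      ((m.factorial : ℂ) ^ 2 /
        (Complex.Gamma ((m : ℂ) + 1 - Complex.I * (Real.sqrt s : ℂ)) *
          Complex.Gamma ((m : ℂ) + 1 + Complex.I * (Real.sqrt s : ℂ)))) *
        ((Real.pi * Real.sqrt s / Real.sinh (Real.pi * Real.sqrt s) : ℝ) : ℂ) := by
  set x := Real.sqrt s with hxdef
  have hx : 0 < x := Real.sqrt_pos.2 hs
  have hx2 : x ^ 2 = s := Real.sq_sqrt hs.le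
  have him : (Complex.I * (x : ℂ)).im ≠ 0 := by simp [hx.ne']
  have him' : (-(Complex.I * (x : ℂ))).im ≠ 0 := by simp [hx.ne']
  have h1 := gamma_shift_aux (Complex.I * x) him m
  have h2 : Complex.Gamma ((m : ℂ) + 1 - Complex.I * x)
      = (∏ l ∈ Finset.Icc 1 m, ((l : ℂ) - Complex.I * x)) * Complex.Gamma (1 - Complex.I * x) := by
    have := gamma_shift_aux (-(Complex.I * x)) him' m
    simpa [sub_eq_add_neg] using this
  have hK := gamma_one_pm x hx
  have hprod : (∏ l ∈ Finset.Icc 1 m, ((l : ℂ) - Complex.I * x))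
      * (∏ l ∈ Finset.Icc 1 m, ((l : ℂ) + Complex.I * x))
      = ∏ l ∈ Finset.Icc 1 m, (((l : ℝ) ^ 2 + s : ℝ) : ℂ) := by
    rw [← Finset.prod_mul_distrib]
    refine Finset.prod_congr rfl (fun l _ => ?_)
    rw [show ((l : ℂ) - Complex.I * x) * ((l : ℂ) + Complex.I * x)
        = (l : ℂ) ^ 2 - Complex.I ^ 2 * (x : ℂ) ^ 2 by ring, Complex.I_sq]
    push_cast [← hx2]
    ring
  have hPz : ∀ l ∈ Finset.Icc 1 m, (((l : ℝ) ^ 2 + s : ℝ) : ℂ) ≠ 0 := by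
    intro l hl
    have : (0 : ℝ) < (l : ℝ) ^ 2 + s := by positivity
    exact_mod_cast Complex.ofReal_ne_zero.2 this.ne'
  have hP : (∏ l ∈ Finset.Icc 1 m, (((l : ℝ) ^ 2 + s : ℝ) : ℂ)) ≠ 0 :=
    Finset.prod_ne_zero_iff.2 hPz
  have hKz : ((Real.pi * x / Real.sinh (Real.pi * x) : ℝ) : ℂ) ≠ 0 := by
    have hsinh : 0 < Real.sinh (Real.pi * x) := by have : Real.sinh 0 < Real.sinh (Real.pi * x) := Real.sinh_lt_sinh.2 (by positivity); simpa using this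
    have : (0 : ℝ) < Real.pi * x / Real.sinh (Real.pi * x) := by positivity
    exact_mod_cast Complex.ofReal_ne_zero.2 this.ne'
  have hden : Complex.Gamma ((m : ℂ) + 1 - Complex.I * x)
      * Complex.Gamma ((m : ℂ) + 1 + Complex.I * x)
      = (∏ l ∈ Finset.Icc 1 m, (((l : ℝ) ^ 2 + s : ℝ) : ℂ))
        * ((Real.pi * x / Real.sinh (Real.pi * x) : ℝ) : ℂ) := by
    rw [h1, h2, mul_mul_mul_comm, hprod, hK]
  have hL : ((∏ l ∈ Finset.Icc 1 m, ((l : ℝ) ^ 2 / ((l : ℝ) ^ 2 + s)) : ℝ) : ℂ)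
      = (m.factorial : ℂ) ^ 2 / ∏ l ∈ Finset.Icc 1 m, (((l : ℝ) ^ 2 + s : ℝ) : ℂ) := by
    push_cast
    rw [Finset.prod_div_distrib]
    congr 1
    rw [Finset.prod_pow]
    congr 1
    rw [← Nat.cast_prod]
    norm_cast
    rw [← Finset.Ico_add_one_right_eq_Icc]
    exact Finset.prod_Ico_id_eq_factorial m
  rw [hL, hden, div_mul_eq_mul_div, mul_comm (∏ l ∈ Finset.Icc 1 m, (((l : ℝ) ^ 2 + s : ℝ) : ℂ)), ← div_div, mul_div_assoc, div_self hKz, mul_one]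
end

section
/- Let (ε_ℓ)_{ℓ≥1} be independent identically distributed exponential random variables with rate 1. Then the random variable W = exp(-Σ_{ℓ=1}^{∞} ε_ℓ/ℓ²) has s-th moment E[W^s] = π√s/sinh(π√s) for every positive integer s. -/
open MeasureTheory ProbabilityTheory Real
open Filter Set Topology
open scoped ENNReal

/-!
Each `ε_ℓ` has Laplace transform `E[exp(-a ε_ℓ)] = (1 + a)⁻¹`, and `E[Σ ε_ℓ/ℓ²] < ∞` makes the
series converge almost surely. Writing `W^s = exp(-Σ (s/ℓ²) ε_ℓ)`, independence factorises the
Laplace transform of each partial sum, and dominated convergence (the integrands lie in `[0, 1]`)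
gives `E[W^s] = ∏_ℓ (1 + s/ℓ²)⁻¹`. Euler's product `sin(πz) = πz ∏ (1 - z²/ℓ²)` at `z = i√s`
identifies this product with `π√s / sinh(π√s)`.
-/

lemma ae_nonneg_expMeasure (r : ℝ) : ∀ᵐ x ∂expMeasure r, 0 ≤ x := by
  simp only [ae_iff, not_le]
  exact (withDensity_apply _ measurableSet_Iio).trans (lintegral_gammaPDF_of_nonpos le_rfl)

lemma lintegral_exp_mul_expMeasure {r c : ℝ} (hc : c < r) :
    ∫⁻ x, ENNReal.ofReal (exp (c * x)) ∂expMeasure r = ENNReal.ofReal (r / (r - c)) := by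
  have hdensity (x : ℝ) : gammaPDF 1 r x * ENNReal.ofReal (exp (c * x)) =
      (Ici 0).indicator (fun x => ENNReal.ofReal r * ENNReal.ofReal (exp ((c - r) * x))) x := by
    rcases lt_or_ge x 0 with hx | hx
    · simp [gammaPDF_of_neg hx, hx]
    · rw [indicator_of_mem (mem_Ici.mpr hx), gammaPDF_of_nonneg hx,
        ← ENNReal.ofReal_mul' (by positivity), ← ENNReal.ofReal_mul' (by positivity)]
      congr 1
      simp only [rpow_one, Gamma_one, div_one, sub_self, rpow_zero, mul_one, mul_assoc, ← exp_add]
      ring_nf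
  have hpdf : Measurable (gammaPDF 1 r) := (measurable_gammaPDFReal 1 r).ennreal_ofReal
  rw [expMeasure, gammaMeasure, lintegral_withDensity_eq_lintegral_mul _ hpdf (by fun_prop)]
  simp only [Pi.mul_apply, hdensity]
  rw [lintegral_indicator measurableSet_Ici, ← setLIntegral_congr Ioi_ae_eq_Ici,
    lintegral_const_mul _ (by fun_prop), ← ofReal_integral_eq_lintegral_ofReal
      (integrableOn_exp_mul_Ioi (by linarith) 0) (ae_of_all _ fun x => (exp_pos _).le),
    integral_exp_mul_Ioi (by linarith), mul_zero, exp_zero,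
    ← ENNReal.ofReal_mul' (div_nonneg_of_nonpos (by norm_num) (by linarith))]
  congr 1
  rw [← neg_sub r c, div_neg, neg_div, neg_neg, mul_one_div]

lemma integral_exp_mul_expMeasure {r c : ℝ} (hr : 0 ≤ r) (hc : c < r) :
    ∫ x, exp (c * x) ∂expMeasure r = r / (r - c) := by
  rw [integral_eq_lintegral_of_nonneg_ae (ae_of_all _ fun x => (exp_pos _).le) (by fun_prop),
    lintegral_exp_mul_expMeasure hc, ENNReal.toReal_ofReal (div_nonneg hr (by linarith))]

lemma lintegral_ofReal_expMeasure_ne_top {r : ℝ} (hr : 0 < r) :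
    ∫⁻ x, ENNReal.ofReal x ∂expMeasure r ≠ ∞ := by
  have hle (x : ℝ) :
      ENNReal.ofReal x ≤ ENNReal.ofReal (2 / r) * ENNReal.ofReal (exp (r / 2 * x)) := by
    rw [← ENNReal.ofReal_mul (by positivity)]
    refine ENNReal.ofReal_le_ofReal ?_
    calc x = 2 / r * (r / 2 * x) := by field_simp
      _ ≤ 2 / r * exp (r / 2 * x) := by gcongr; linarith [add_one_le_exp (r / 2 * x)]
  refine ne_top_of_le_ne_top ?_ (lintegral_mono hle)
  rw [lintegral_const_mul _ (by fun_prop), lintegral_exp_mul_expMeasure (by linarith)]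
  exact ENNReal.mul_ne_top ENNReal.ofReal_ne_top ENNReal.ofReal_ne_top

section

variable {Ω : Type*} [MeasurableSpace Ω] {μ : Measure Ω} {X : ℕ → Ω → ℝ}

lemma ae_summable_of_tsum_lintegral_ne_top (hX : ∀ l, AEMeasurable (X l) μ)
    (hnonneg : ∀ l, 0 ≤ᵐ[μ] X l) (hfin : ∑' l, ∫⁻ ω, ENNReal.ofReal (X l ω) ∂μ ≠ ∞) :
    ∀ᵐ ω ∂μ, Summable fun l => X l ω := by
  have hmeas (l : ℕ) : AEMeasurable (fun ω => ENNReal.ofReal (X l ω)) μ := (hX l).ennreal_ofReal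
  rw [← lintegral_tsum hmeas] at hfin
  filter_upwards [ae_lt_top' (AEMeasurable.tsum hmeas) hfin, ae_all_iff.2 hnonneg]
    with ω hω hω_nonneg
  exact (ENNReal.summable_toReal hω.ne).congr fun l => ENNReal.toReal_ofReal (hω_nonneg l)

lemma ae_summable_mul_of_lintegral_le {a : ℕ → ℝ} {C : ℝ≥0∞} (hX : ∀ l, AEMeasurable (X l) μ)
    (hnonneg : ∀ l, 0 ≤ᵐ[μ] X l) (hbound : ∀ l, ∫⁻ ω, ENNReal.ofReal (X l ω) ∂μ ≤ C)
    (hC : C ≠ ∞) (ha : ∀ l, 0 ≤ a l) (hsum : Summable a) :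
    ∀ᵐ ω ∂μ, Summable fun l => a l * X l ω := by
  have hterm (l : ℕ) : ∫⁻ ω, ENNReal.ofReal (a l * X l ω) ∂μ ≤ ENNReal.ofReal (a l) * C := by
    simp_rw [ENNReal.ofReal_mul (ha l)]
    rw [lintegral_const_mul'' _ (hX l).ennreal_ofReal]
    exact mul_le_mul_right (hbound l) _
  have hfin : ∑' l, ENNReal.ofReal (a l) * C ≠ ∞ := by
    rw [ENNReal.tsum_mul_right, ← ENNReal.ofReal_tsum_of_nonneg ha hsum]
    exact ENNReal.mul_ne_top ENNReal.ofReal_ne_top hC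
  exact ae_summable_of_tsum_lintegral_ne_top (fun l => (hX l).const_mul (a l))
    (fun l => (hnonneg l).mono fun ω hω => mul_nonneg (ha l) hω)
    (ne_top_of_le_ne_top hfin (ENNReal.tsum_le_tsum hterm))

lemma tendsto_prod_integral_exp_neg_of_iIndepFun (hX : ∀ l, AEMeasurable (X l) μ)
    (hindep : iIndepFun X μ) (hnonneg : ∀ l, 0 ≤ᵐ[μ] X l)
    (hsum : ∀ᵐ ω ∂μ, Summable fun l => X l ω) :
    Tendsto (fun n => ∏ l ∈ Finset.range n, ∫ ω, exp (-X l ω) ∂μ) atTop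
      (𝓝 (∫ ω, exp (-∑' l, X l ω) ∂μ)) := by
  have := hindep.isProbabilityMeasure
  have hprod (n : ℕ) : ∏ l ∈ Finset.range n, ∫ ω, exp (-X l ω) ∂μ =
      ∫ ω, exp (-∑ l ∈ Finset.range n, X l ω) ∂μ := by
    simpa only [mgf, Finset.sum_apply, neg_one_mul] using (hindep.mgf_sum₀ (t := -1) hX _).symm
  simp_rw [hprod]
  refine tendsto_integral_of_dominated_convergence (fun _ => 1) (fun n => by fun_prop)
    (integrable_const 1) (fun n => ?_) ?_
  · filter_upwards [ae_all_iff.2 hnonneg] with ω hω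
    rw [norm_of_nonneg (exp_pos _).le, exp_le_one_iff, neg_nonpos]
    exact Finset.sum_nonneg fun l _ => hω l
  · filter_upwards [hsum] with ω hω
    exact ((continuous_exp.comp continuous_neg).tendsto _).comp hω.hasSum.tendsto_sum_nat

lemma tendsto_prod_inv_one_add_of_iIndepFun_expMeasure {ε : ℕ → Ω → ℝ} {a : ℕ → ℝ}
    (hmeas : ∀ l, Measurable (ε l)) (hindep : iIndepFun ε μ)
    (hdist : ∀ l, μ.map (ε l) = expMeasure 1) (ha : ∀ l, 0 ≤ a l) (hsum : Summable a) :
    Tendsto (fun n => ∏ l ∈ Finset.range n, (1 + a l)⁻¹) atTop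
      (𝓝 (∫ ω, exp (-∑' l, a l * ε l ω) ∂μ)) := by
  have hε_nonneg (l : ℕ) : 0 ≤ᵐ[μ] ε l :=
    ae_of_ae_map (p := (0 ≤ ·)) (hmeas l).aemeasurable (by rw [hdist]; exact ae_nonneg_expMeasure 1)
  have hlaplace (l : ℕ) : ∫ ω, exp (-(a l * ε l ω)) ∂μ = (1 + a l)⁻¹ := by
    calc ∫ ω, exp (-(a l * ε l ω)) ∂μ = ∫ x, exp (-a l * x) ∂(μ.map (ε l)) := by
          rw [integral_map (hmeas l).aemeasurable (by fun_prop)]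
          simp only [neg_mul]
      _ = (1 + a l)⁻¹ := by
          rw [hdist, integral_exp_mul_expMeasure zero_le_one (by linarith [ha l]),
            sub_neg_eq_add, one_div, add_comm]
  have hsummable : ∀ᵐ ω ∂μ, Summable fun l => a l * ε l ω :=
    ae_summable_mul_of_lintegral_le (fun l => (hmeas l).aemeasurable) hε_nonneg
      (fun l => by rw [← lintegral_map (by fun_prop) (hmeas l), hdist])
      (lintegral_ofReal_expMeasure_ne_top one_pos) ha hsum
  simp_rw [← hlaplace]
  exact tendsto_prod_integral_exp_neg_of_iIndepFun (fun l => ((hmeas l).const_mul _).aemeasurable)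
    (hindep.comp (fun l x => a l * x) fun l => measurable_const.mul measurable_id)
    (fun l => (hε_nonneg l).mono fun ω hω => mul_nonneg (ha l) hω) hsummable

end

/-- Euler's sine product evaluated at the imaginary point `y i`. -/
lemma tendsto_prod_one_add_sq_div_sq {y : ℝ} (hy : y ≠ 0) :
    Tendsto (fun n => ∏ j ∈ Finset.range n, (1 + y ^ 2 / ((j : ℝ) + 1) ^ 2)) atTop
      (𝓝 (sinh (π * y) / (π * y))) := by
  have hterm (j : ℕ) :
      1 + sineTerm (y * Complex.I) j = ((1 + y ^ 2 / ((j : ℝ) + 1) ^ 2 : ℝ) : ℂ) := by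
    simp only [sineTerm, mul_pow, Complex.I_sq]
    push_cast
    ring
  have hlimit : Complex.sin (π * (y * Complex.I)) / (π * (y * Complex.I)) =
      ((sinh (π * y) / (π * y) : ℝ) : ℂ) := by
    rw [← mul_assoc, ← Complex.ofReal_mul, Complex.sin_mul_I, ← Complex.ofReal_sinh]
    push_cast
    field_simp [Complex.I_ne_zero]
  have h := tendsto_euler_sin_prod' (x := y * Complex.I) (by simp [hy])
  simp only [hterm, hlimit, ← Complex.ofReal_prod] at h
  exact (Complex.continuous_re.tendsto _).comp h

theorem moments_of_exponential_product_general
    {Ω : Type*} [MeasurableSpace Ω] (μ : Measure Ω)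
    (ε : ℕ → Ω → ℝ) (hmeas : ∀ l, Measurable (ε l))
    (hindep : ProbabilityTheory.iIndepFun ε μ)
    (hdist : ∀ l, μ.map (ε l) = ProbabilityTheory.expMeasure 1)
    (s : ℕ) (hs : 1 ≤ s) :
    ∫ ω, (Real.exp (-(∑' l : ℕ, ε (l + 1) ω / ((l : ℝ) + 1) ^ 2))) ^ s ∂μ =
      Real.pi * Real.sqrt s / Real.sinh (Real.pi * Real.sqrt s) := by
  set a : ℕ → ℝ := fun l => s / ((l : ℝ) + 1) ^ 2 with ha
  have ha_summable : Summable a := by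
    simpa [ha, div_eq_mul_inv] using
      ((summable_nat_add_iff 1).2 (summable_nat_pow_inv.2 one_lt_two)).mul_left (s : ℝ)
  have hpow (ω : Ω) : exp (-∑' l, ε (l + 1) ω / ((l : ℝ) + 1) ^ 2) ^ s =
      exp (-∑' l, a l * ε (l + 1) ω) := by
    rw [← exp_nat_mul, mul_neg, ← tsum_mul_left]
    congr 1
    exact neg_inj.2 (tsum_congr fun l => by simp only [ha]; ring)
  simp_rw [hpow]
  refine tendsto_nhds_unique (tendsto_prod_inv_one_add_of_iIndepFun_expMeasure
    (fun l => hmeas (l + 1)) (hindep.precomp (add_left_injective 1)) (fun l => hdist (l + 1))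
    (fun l => by positivity) ha_summable) ?_
  have hsqrt : √(s : ℝ) ≠ 0 := sqrt_ne_zero'.2 (by exact_mod_cast hs)
  have h := (tendsto_prod_one_add_sq_div_sq hsqrt).inv₀
    (div_ne_zero (by simpa using hsqrt) (by positivity))
  simpa only [ha, sq_sqrt (Nat.cast_nonneg _), Finset.prod_inv_distrib, inv_div] using h

/-- Moments of `W = exp(-∑_{ℓ≥1} ε_ℓ/ℓ²)` for i.i.d. `Exp(1)` random variables. -/
theorem moments_of_exponential_product
    {Ω : Type*} [MeasurableSpace Ω] (μ : Measure Ω) [IsProbabilityMeasure μ]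
    (ε : ℕ → Ω → ℝ) (hmeas : ∀ l, Measurable (ε l))
    (hindep : ProbabilityTheory.iIndepFun ε μ)
    (hdist : ∀ l, μ.map (ε l) = ProbabilityTheory.expMeasure 1)
    (s : ℕ) (hs : 1 ≤ s) :
    ∫ ω, (Real.exp (-(∑' l : ℕ, ε (l + 1) ω / ((l : ℝ) + 1) ^ 2))) ^ s ∂μ =
      Real.pi * Real.sqrt s / Real.sinh (Real.pi * Real.sqrt s) :=
  moments_of_exponential_product_general μ ε hmeas hindep hdist s hs
end

section
/- Define F(z,u) = exp(u(e^{-z}+z-1)) and f_n(u) = n!·[z^n]F(z,u) (the n-th coefficient of the Taylor expansion in z, times n!). Then f_n(u) is a polynomial in u of degree ⌊n/2⌋, and the leading coefficient of f_{2n} equals (2n-1)!! = (2n-1)(2n-3)···3·1. -/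
/-!
Since `∂_z F = u (1 - e^{-z}) F` and the `(i+1)`-st derivative of `u (1 - e^{-z})` at `0` is
`u (-1)^i`, Leibniz's rule gives `f_{n+1} = u ∑_{i<n} C(n,i+1) (-1)^i f_{n-1-i}` with `f_0 = 1`.
Inductively `deg f_n ≤ ⌊n/2⌋`, and in the coefficient of `u^{⌊n/2⌋}` only the terms `i = 0, 1`
survive: the top coefficients satisfy `c_{2m+2} = (2m+1) c_{2m}` and
`c_{2m+3} = (2m+2) c_{2m+1} - C(2m+2,2) c_{2m}`. Hence `c_{2m} = (2m-1)!! > 0`, and from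
`f_1 = 0` also `c_{2m+1} < 0` for `m ≥ 1`.
-/

open Finset Polynomial

noncomputable def fPoly : ℕ → ℝ[X]
  | 0 => 1
  | n + 1 => X * ∑ i ∈ range n, ((n.choose (i + 1) : ℝ) * (-1) ^ i) • fPoly (n - 1 - i)

lemma fPoly_zero : fPoly 0 = 1 := by rw [fPoly]

lemma fPoly_succ (n : ℕ) :
    fPoly (n + 1) =
      X * ∑ i ∈ range n, ((n.choose (i + 1) : ℝ) * (-1) ^ i) • fPoly (n - 1 - i) := by
  rw [fPoly]

lemma fPoly_one : fPoly 1 = 0 := by simp [fPoly_succ]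

lemma deriv_exp_mul_exp_neg_add_sub_one (u : ℝ) :
    deriv (fun z : ℝ => Real.exp (u * (Real.exp (-z) + z - 1))) =
      fun z => (u - u * Real.exp (-z)) * Real.exp (u * (Real.exp (-z) + z - 1)) := by
  ext z
  exact ((((hasDerivAt_neg z).exp.add (hasDerivAt_id' z)).sub_const 1).const_mul u).exp.deriv.trans
    (by dsimp; ring)

lemma iteratedDeriv_succ_sub_mul_exp_neg_zero (u : ℝ) (i : ℕ) :
    iteratedDeriv (i + 1) (fun z : ℝ => u - u * Real.exp (-z)) 0 = u * (-1) ^ i := by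
  have hderiv : deriv (fun z : ℝ => u - u * Real.exp (-z)) = fun z => u * Real.exp (-z) := by
    ext z
    rw [(((hasDerivAt_neg z).exp.const_mul u).const_sub u).deriv]
    ring
  rw [iteratedDeriv_succ', hderiv, iteratedDeriv_const_mul_field, iteratedDeriv_comp_neg]
  simp [iteratedDeriv_eq_iterate]

lemma iteratedDeriv_exp_mul_exp_neg_add_sub_one_zero (u : ℝ) (n : ℕ) :
    iteratedDeriv n (fun z : ℝ => Real.exp (u * (Real.exp (-z) + z - 1))) 0 =
      (fPoly n).eval u := by
  induction n using Nat.strong_induction_on with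
  | _ n ih =>
  rcases n with _ | n
  · simp [fPoly_zero]
  rw [iteratedDeriv_succ', deriv_exp_mul_exp_neg_add_sub_one,
    iteratedDeriv_fun_mul (by fun_prop) (by fun_prop), sum_range_succ', fPoly_succ, eval_mul,
    eval_X, eval_finsetSum, mul_sum]
  simp only [iteratedDeriv_succ_sub_mul_exp_neg_zero, iteratedDeriv_zero, neg_zero, Real.exp_zero,
    mul_one, sub_self, mul_zero, zero_mul, add_zero]
  refine sum_congr rfl fun i _ => ?_
  rw [ih _ (by omega), eval_smul, smul_eq_mul, Nat.sub_sub, add_comm 1 i]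
  ring

lemma natDegree_fPoly_le (n : ℕ) : (fPoly n).natDegree ≤ n / 2 := by
  induction n using Nat.strong_induction_on with
  | _ n ih =>
  rcases n with _ | _ | n
  · simp [fPoly_zero]
  · simp [fPoly_one]
  rw [fPoly_succ]
  calc _ ≤ X.natDegree + _ := natDegree_mul_le
    _ ≤ 1 + n / 2 := add_le_add natDegree_X_le <| natDegree_sum_le_of_forall_le _ _ fun i _ =>
        (natDegree_smul_le _ _).trans ((ih _ (by omega)).trans (by omega))
    _ = (n + 1 + 1) / 2 := by omega

lemma coeff_fPoly_of_lt {n d : ℕ} (h : n / 2 < d) : (fPoly n).coeff d = 0 :=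
  coeff_eq_zero_of_natDegree_lt ((natDegree_fPoly_le n).trans_lt h)

lemma coeff_fPoly_add_three (k d : ℕ) (hd : (k + 1) / 2 = d) :
    (fPoly (k + 3)).coeff (d + 1) =
      (k + 2) * (fPoly (k + 1)).coeff d - (k + 2).choose 2 * (fPoly k).coeff d := by
  rw [fPoly_succ, coeff_X_mul, finsetSum_coeff, sum_range_succ', sum_range_succ',
    sum_eq_zero fun i hi => by
      rw [coeff_smul, coeff_fPoly_of_lt (by have := mem_range.1 hi; omega), smul_zero]]
  simp only [zero_add, Nat.reduceAdd, pow_one, mul_neg, mul_one, Nat.add_one_sub_one,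
    add_tsub_cancel_right, neg_smul, coeff_neg, coeff_smul, smul_eq_mul, Nat.choose_one_right,
    Nat.cast_add, Nat.cast_ofNat, pow_zero, tsub_zero]
  ring

lemma coeff_fPoly_two_mul (m : ℕ) :
    (fPoly (2 * m)).coeff m = ∏ i ∈ range m, (2 * (i : ℝ) + 1) := by
  induction m with
  | zero => simp [fPoly_zero]
  | succ m ih =>
  rw [prod_range_succ, ← ih]
  rcases m with _ | j
  · simp [fPoly_succ, fPoly_zero]
  rw [show 2 * (j + 1 + 1) = 2 * j + 1 + 3 by ring, coeff_fPoly_add_three _ _ (by omega),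
    show 2 * j + 1 + 1 = 2 * (j + 1) by ring, coeff_fPoly_of_lt (n := 2 * j + 1) (by omega)]
  push_cast
  ring

lemma coeff_fPoly_two_mul_add_three_neg (j : ℕ) :
    (fPoly (2 * j + 3)).coeff (j + 1) < 0 := by
  induction j with
  | zero => norm_num [fPoly_succ, fPoly_zero, sum_range_succ]
  | succ j ih =>
  rw [show 2 * (j + 1) + 3 = 2 * j + 2 + 3 by ring, coeff_fPoly_add_three _ _ (by omega),
    show 2 * j + 2 + 1 = 2 * j + 3 by ring, show 2 * j + 2 = 2 * (j + 1) by ring,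
    coeff_fPoly_two_mul]
  have hprod : 0 < ∏ i ∈ range (j + 1), (2 * (i : ℝ) + 1) := prod_pos fun i _ => by positivity
  have hchoose : (0 : ℝ) < ((2 * (j + 1) + 2).choose 2 : ℕ) := by
    exact_mod_cast Nat.choose_pos (by omega)
  nlinarith

lemma natDegree_fPoly (n : ℕ) : (fPoly n).natDegree = n / 2 := by
  obtain ⟨m, rfl | rfl⟩ := Nat.even_or_odd' n
  · rw [show 2 * m / 2 = m by omega]
    refine natDegree_eq_of_le_of_coeff_ne_zero ((natDegree_fPoly_le _).trans (by omega)) ?_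
    rw [coeff_fPoly_two_mul]
    exact (prod_pos fun i _ => by positivity).ne'
  · rcases m with _ | j
    · simp [fPoly_one]
    rw [show (2 * (j + 1) + 1) / 2 = j + 1 by omega, show 2 * (j + 1) + 1 = 2 * j + 3 by ring]
    exact natDegree_eq_of_le_of_coeff_ne_zero ((natDegree_fPoly_le _).trans (by omega))
      (coeff_fPoly_two_mul_add_three_neg j).ne

/-- `f_n(u) = n!·[z^n] e^{u(e^{-z}+z-1)}` is a polynomial in `u` of degree
`⌊n/2⌋`, and the leading coefficient of `f_{2n}` is `(2n-1)!!`. -/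
theorem coeff_polynomial_of_F (n : ℕ) :
    ∃ p : Polynomial ℝ,
      (∀ u : ℝ, Polynomial.eval u p =
        iteratedDeriv n (fun z : ℝ => Real.exp (u * (Real.exp (-z) + z - 1))) 0) ∧
      p.natDegree = n / 2 ∧
      ∀ m : ℕ, n = 2 * m →
        p.leadingCoeff = ∏ i ∈ Finset.range m, (2 * (i : ℝ) + 1) := by
  refine ⟨fPoly n, fun u => (iteratedDeriv_exp_mul_exp_neg_add_sub_one_zero u n).symm,
    natDegree_fPoly n, fun m hm => ?_⟩
  rw [leadingCoeff, natDegree_fPoly, hm, show 2 * m / 2 = m by omega, coeff_fPoly_two_mul]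
end
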